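/- arXiv:2305.11843 — 5 statements merged into one kernel-verified Lean document; each statement's English description precedes it below -/
import Mathlib

section
/- Let (K, r_n, ξ) be a Cayley extender with voltage group G. The derived graph K_{r_n}^ξ is an (n+1)-maniplex if and only if: (1) the set {ξ(F) : F a facet of K} generates G, and (2) for every facet F of K, if r_n Φ = Φ for some flag Φ ∈ F, or r_n Φ = r_i Φ for some flag Φ ∈ F and some i ∈ {0, …, n−1}, then ξ(F) ≠ 1. -/
/-! ## Basic notions: maniplexes, premaniplexes, orbits, automorphisms -/

/-- One monodromy step using an index satisfying `P`. -/
def StepOn {K : Type*} {n : ℕ} (r : Fin n → K → K) (P : Fin n → Prop) (x y : K) : Prop :=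
  ∃ i, P i ∧ r i x = y

/-- `y` is reachable from `x` by monodromies whose index satisfies `P`;
this is the orbit relation of the subgroup generated by those monodromies. -/
def ReachOn {K : Type*} {n : ℕ} (r : Fin n → K → K) (P : Fin n → Prop) : K → K → Prop :=
  Relation.ReflTransGen (StepOn r P)

/-- Orbit relation of the full monodromy group. -/
def ConnRel {K : Type*} {n : ℕ} (r : Fin n → K → K) : K → K → Prop :=
  ReachOn r fun _ => True

/-- Same facet: orbit relation of `r_0, …, r_{n-2}`. -/
def FacetRel {K : Type*} {n : ℕ} (r : Fin n → K → K) : K → K → Prop :=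
  ReachOn r fun i => (i : ℕ) + 1 < n

/-- Same vertex: orbit relation of `r_1, …, r_{n-1}`. -/
def VertexRel {K : Type*} {n : ℕ} (r : Fin n → K → K) : K → K → Prop :=
  ReachOn r fun i => 1 ≤ (i : ℕ)

/-- An `n`-maniplex on the flag set `K`, given by its monodromies `r_0, …, r_{n-1}`. -/
structure IsManiplex {K : Type*} (n : ℕ) (r : Fin n → K → K) : Prop where
  nonempty : Nonempty K
  invol : ∀ i, Function.Involutive (r i)
  fixfree : ∀ (i : Fin n) (x : K), r i x ≠ x
  fixfree₂ : ∀ (i j : Fin n), i ≠ j → ∀ x : K, r i (r j x) ≠ x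
  sq : ∀ (i j : Fin n), 2 ≤ |(i : ℤ) - (j : ℤ)| → ∀ x : K, r i (r j (r i (r j x))) = x
  conn : ∀ x y : K, ConnRel r x y

/-- A premaniplex of rank `n` (fixed points allowed, connectivity not required). -/
structure IsPremaniplex {K : Type*} (n : ℕ) (r : Fin n → K → K) : Prop where
  invol : ∀ i, Function.Involutive (r i)
  sq : ∀ (i j : Fin n), 2 ≤ |(i : ℤ) - (j : ℤ)| → ∀ x : K, r i (r j (r i (r j x))) = x

/-- The automorphism group: permutations of the flags commuting with every monodromy. -/
def autGroup {K : Type*} {n : ℕ} (r : Fin n → K → K) : Subgroup (Equiv.Perm K) where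
  carrier := {τ : Equiv.Perm K | ∀ (i : Fin n) (x : K), τ (r i x) = r i (τ x)}
  one_mem' := by intro i x; rfl
  mul_mem' := by
    intro a b ha hb i x
    simp only [Set.mem_setOf_eq] at ha hb ⊢
    simp only [Equiv.Perm.mul_apply]
    rw [hb i x, ha i (b x)]
  inv_mem' := by
    intro a ha i x
    simp only [Set.mem_setOf_eq] at ha ⊢
    have h := ha i (a⁻¹ x)
    rw [show a (a⁻¹ x) = x from a.apply_symm_apply x] at h
    rw [← h, show a⁻¹ (a (r i (a⁻¹ x))) = r i (a⁻¹ x) from a.symm_apply_apply _]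

/-- A pre-extender: an involutory permutation `rn` of the flags of the `n`-maniplex `(K, r)`
commuting with `r_0, …, r_{n-2}`. -/
structure IsPreExtender {K : Type*} {n : ℕ} (r : Fin n → K → K) (rn : K → K) : Prop where
  maniplex : IsManiplex n r
  rn_invol : Function.Involutive rn
  rn_comm : ∀ i : Fin n, (i : ℕ) + 1 < n → ∀ x : K, rn (r i x) = r i (rn x)

/-- A Cayley extender `(K, rn, ξ)` with voltage group `G`; the voltage is encoded as a
function on flags which is constant on facets. -/
structure IsCayleyExtender {K : Type*} {G : Type*} [Group G] {n : ℕ}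
    (r : Fin n → K → K) (rn : K → K) (ξ : K → G) : Prop where
  maniplex : IsManiplex n r
  rn_invol : Function.Involutive rn
  rn_comm : ∀ i : Fin n, (i : ℕ) + 1 < n → ∀ x : K, rn (r i x) = r i (rn x)
  const : ∀ Φ Ψ : K, FacetRel r Φ Ψ → ξ Φ = ξ Ψ
  voltage_inv : ∀ Φ : K, ξ (rn Φ) = (ξ Φ)⁻¹

/-- A Cayley coextender `(K, r_{-1}, ξ')` with voltage group `G'`; the voltage is encoded as
a function on flags which is constant on vertices. -/
structure IsCayleyCoextender {K : Type*} {G' : Type*} [Group G'] {n : ℕ}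
    (r : Fin n → K → K) (rm : K → K) (ξ' : K → G') : Prop where
  maniplex : IsManiplex n r
  rm_invol : Function.Involutive rm
  rm_comm : ∀ i : Fin n, 1 ≤ (i : ℕ) → ∀ x : K, rm (r i x) = r i (rm x)
  const : ∀ Φ Ψ : K, VertexRel r Φ Ψ → ξ' Φ = ξ' Ψ
  voltage_inv : ∀ Φ : K, ξ' (rm Φ) = (ξ' Φ)⁻¹

/-- Monodromies of the derived graph `K_{rn}^ξ` on flag set `K × G`. -/
def derivedMono {K : Type*} {G : Type*} [Group G] {n : ℕ}
    (r : Fin n → K → K) (rn : K → K) (ξ : K → G) : Fin (n + 1) → K × G → K × G :=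
  fun i p =>
    if h : (i : ℕ) < n then (r ⟨(i : ℕ), h⟩ p.1, p.2) else (rn p.1, ξ p.1 * p.2)

/-- Monodromies of the derived graph `K_{r_{-1}}^{ξ'}` of a coextender, on flag set `K × G'`. -/
def coderivedMono {K : Type*} {G' : Type*} [Group G'] {n : ℕ}
    (r : Fin n → K → K) (rm : K → K) (ξ' : K → G') : Fin (n + 1) → K × G' → K × G' :=
  fun i p =>
    if _h : (i : ℕ) = 0 then (rm p.1, ξ' p.1 * p.2)
    else (r ⟨(i : ℕ) - 1, by have := i.isLt; omega⟩ p.1, p.2)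

/-- Monodromies of the flat amalgamation, on flag set `K × G' × G`. -/
def amalgMono {K : Type*} {G' : Type*} {G : Type*} [Group G'] [Group G] {n : ℕ}
    (r : Fin n → K → K) (rm : K → K) (rn : K → K) (ξ' : K → G') (ξ : K → G) :
    Fin (n + 2) → K × G' × G → K × G' × G :=
  fun i p =>
    if _h0 : (i : ℕ) = 0 then (rm p.1, ξ' p.1 * p.2.1, p.2.2)
    else if _hn : (i : ℕ) = n + 1 then (rn p.1, p.2.1, ξ p.1 * p.2.2)
    else (r ⟨(i : ℕ) - 1, by have := i.isLt; omega⟩ p.1, p.2.1, p.2.2)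

/-- The path intersection property characterizing flag graphs of polytopes. -/
def IsPolytopal {K : Type*} {m : ℕ} (t : Fin m → K → K) : Prop :=
  ∀ (x y : K) (k l : ℕ), k ≤ l → l < m →
    ReachOn t (fun i => k ≤ (i : ℕ)) x y →
    ReachOn t (fun i => (i : ℕ) ≤ l) x y →
    ReachOn t (fun i => k ≤ (i : ℕ) ∧ (i : ℕ) ≤ l) x y

/-- `S` is an `(rn, rn')`-friendly set: for every flag `Φ` and `τ ∈ S` there is `σ ∈ S`
with `rn'(Φτ) = (rn Φ)σ` (automorphisms act on the right, i.e. by function application). -/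
def FriendlySet {K : Type*} (rn rn' : K → K) (S : Set (Equiv.Perm K)) : Prop :=
  ∀ Φ : K, ∀ τ ∈ S, ∃ σ ∈ S, rn' (τ Φ) = σ (rn Φ)

/-- `♥(K, rn)`: the union of all `rn`-friendly subsets of `Aut(K)`. -/
def heartSet {K : Type*} {n : ℕ} (r : Fin n → K → K) (rn : K → K) : Set (Equiv.Perm K) :=
  ⋃₀ {S : Set (Equiv.Perm K) | S ⊆ ↑(autGroup r) ∧ FriendlySet rn rn S}

/-- Relations of the universal voltage group `G(K, rn)`: one generator per flag, generators of
flags in the same facet are identified, and `α_F · α_{rn F} = 1`. -/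
def UnivRels {K : Type*} {n : ℕ} (r : Fin n → K → K) (rn : K → K) : Set (FreeGroup K) :=
  {w | ∃ Φ Ψ : K, FacetRel r Φ Ψ ∧ w = FreeGroup.of Φ * (FreeGroup.of Ψ)⁻¹} ∪
    {w | ∃ Φ : K, w = FreeGroup.of Φ * FreeGroup.of (rn Φ)}

/-- The universal voltage assignment `Φ ↦ α_{F_Φ}` into `G(K, rn)`. -/
def univVoltage {K : Type*} {n : ℕ} (r : Fin n → K → K) (rn : K → K) :
    K → PresentedGroup (UnivRels r rn) :=
  fun Φ => PresentedGroup.of Φ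

namespace Stmt0Aux

variable {K G : Type*} [Group G] {n : ℕ} {r : Fin n → K → K} {rn : K → K} {ξ : K → G}

lemma dm_lt (i : Fin (n + 1)) (h : (i : ℕ) < n) (p : K × G) :
    derivedMono r rn ξ i p = (r ⟨(i : ℕ), h⟩ p.1, p.2) := by
  simp [derivedMono, h]

lemma dm_eq (i : Fin (n + 1)) (h : ¬ (i : ℕ) < n) (p : K × G) :
    derivedMono r rn ξ i p = (rn p.1, ξ p.1 * p.2) := by
  simp [derivedMono, h]

lemma xi_r (hext : IsCayleyExtender r rn ξ) (j : Fin n) (hj : (j : ℕ) + 1 < n) (Φ : K) :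
    ξ (r j Φ) = ξ Φ :=
  hext.const _ _ (Relation.ReflTransGen.single ⟨j, hj, hext.maniplex.invol j Φ⟩)

lemma reachOn_symm {A : Type*} {m : ℕ} {f : Fin m → A → A}
    (h : ∀ i, Function.Involutive (f i)) {P : Fin m → Prop} :
    Symmetric (ReachOn f P) := by
  refine fun x y hxy => @Std.Symm.symm _ _ (@Relation.ReflTransGen.symmetric _ _ ⟨?_⟩) x y hxy
  rintro x y ⟨i, hP, hi⟩
  exact ⟨i, hP, by rw [← hi]; exact h i x⟩

lemma dm_invol (hext : IsCayleyExtender r rn ξ) (i : Fin (n + 1)) :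
    Function.Involutive (derivedMono r rn ξ i) := by
  intro p
  by_cases h : (i : ℕ) < n
  · rw [dm_lt i h, dm_lt i h]
    exact Prod.ext (hext.maniplex.invol _ p.1) rfl
  · rw [dm_eq i h, dm_eq i h]
    refine Prod.ext (hext.rn_invol p.1) ?_
    simp only
    rw [hext.voltage_inv p.1, inv_mul_cancel_left]

/-- Lift connectivity of `K` to the derived graph (fixed group coordinate). -/
lemma lift_reach {Φ Ψ : K} (hΦΨ : ReachOn r (fun _ => True) Φ Ψ) (g : G) :
    ReachOn (derivedMono r rn ξ) (fun _ => True) (Φ, g) (Ψ, g) := by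
  induction hΦΨ with
  | refl => exact Relation.ReflTransGen.refl
  | tail _ hstep ih =>
    obtain ⟨i, -, hi⟩ := hstep
    refine Relation.ReflTransGen.tail ih ⟨⟨(i : ℕ), by omega⟩, trivial, ?_⟩
    rw [dm_lt _ (by simpa using i.isLt)]
    simp [hi]

lemma coord_closure {p q : K × G}
    (hpq : ReachOn (derivedMono r rn ξ) (fun _ => True) p q)
    (hp : p.2 ∈ Subgroup.closure (Set.range ξ)) :
    q.2 ∈ Subgroup.closure (Set.range ξ) := by
  induction hpq with
  | refl => exact hp
  | tail _ hstep ih =>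
    obtain ⟨i, -, hi⟩ := hstep
    by_cases h : (i : ℕ) < n
    · rw [dm_lt i h] at hi
      rw [← hi]
      exact ih
    · rw [dm_eq i h] at hi
      rw [← hi]
      exact Subgroup.mul_mem _ (Subgroup.subset_closure ⟨_, rfl⟩) ih

/-- Every element of the closure can be realized as a change of group coordinate. -/
lemma move_group (hext : IsCayleyExtender r rn ξ) {x : G}
    (hx : x ∈ Subgroup.closure (Set.range ξ)) :
    ∀ (Φ : K) (g : G), ReachOn (derivedMono r rn ξ) (fun _ => True) (Φ, g) (Φ, x * g) := by
  induction hx using Subgroup.closure_induction with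
  | mem y hy =>
    obtain ⟨Ψ, rfl⟩ := hy
    intro Φ g
    have h1 : ReachOn (derivedMono r rn ξ) (fun _ => True) (Φ, g) (Ψ, g) :=
      lift_reach (hext.maniplex.conn Φ Ψ) g
    have h2 : ReachOn (derivedMono r rn ξ) (fun _ => True) (Ψ, g) (rn Ψ, ξ Ψ * g) :=
      Relation.ReflTransGen.single ⟨⟨n, by omega⟩, trivial, by rw [dm_eq _ (by simp)]⟩
    have h3 : ReachOn (derivedMono r rn ξ) (fun _ => True) (rn Ψ, ξ Ψ * g) (Φ, ξ Ψ * g) :=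
      lift_reach (hext.maniplex.conn (rn Ψ) Φ) _
    exact (h1.trans h2).trans h3
  | one => intro Φ g; simpa [ReachOn] using (Relation.ReflTransGen.refl :
      ReachOn (derivedMono r rn ξ) (fun _ => True) (Φ, g) (Φ, g))
  | mul y z hy hz ihy ihz =>
    intro Φ g
    simpa [ReachOn, mul_assoc] using (ihz Φ g).trans (ihy Φ (z * g))
  | inv y hy ihy =>
    intro Φ g
    have h := ihy Φ (y⁻¹ * g)
    rw [mul_inv_cancel_left] at h
    exact reachOn_symm (dm_invol hext) h

end Stmt0Aux

/-- The derived graph of a Cayley extender is an `(n+1)`-maniplex iff the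
voltages generate `G` and every facet on which `r_n` fixes a flag, or maps a flag to an
adjacent flag, has nontrivial voltage. -/
theorem statement0 {K G : Type*} [Group G] {n : ℕ}
    (r : Fin n → K → K) (rn : K → K) (ξ : K → G)
    (hext : IsCayleyExtender r rn ξ) :
    IsManiplex (n + 1) (derivedMono r rn ξ) ↔
      (Subgroup.closure (Set.range ξ) = ⊤ ∧
        ∀ Φ : K, (rn Φ = Φ ∨ ∃ i : Fin n, rn Φ = r i Φ) → ξ Φ ≠ 1) := by
  open Stmt0Aux in
  constructor
  · intro hM
    constructor
    · rw [eq_top_iff]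
      rintro g -
      obtain ⟨Φ0⟩ := hext.maniplex.nonempty
      have h := hM.conn (Φ0, 1) (Φ0, g)
      exact coord_closure h (Subgroup.one_mem _)
    · rintro Φ (hfix | ⟨i, hi⟩) hone
      · refine hM.fixfree ⟨n, by omega⟩ (Φ, 1) ?_
        rw [dm_eq _ (by simp)]
        simp [hfix, hone]
      · refine hM.fixfree₂ ⟨(i : ℕ), by omega⟩ ⟨n, by omega⟩
          (by have := i.isLt; simp only [ne_eq, Fin.mk.injEq]; omega) (Φ, 1) ?_
        rw [dm_eq ⟨n, by omega⟩ (by simp),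
          dm_lt ⟨(i : ℕ), by omega⟩ (by simpa using i.isLt)]
        have hri : r ⟨(i : ℕ), i.isLt⟩ (rn Φ) = Φ := by
          rw [hi, Fin.eta]
          exact hext.maniplex.invol i Φ
        simp [hri, hone]
  · rintro ⟨hgen, hvolt⟩
    refine ⟨?_, dm_invol hext, ?_, ?_, ?_, ?_⟩
    · obtain ⟨Φ0⟩ := hext.maniplex.nonempty
      exact ⟨(Φ0, 1)⟩
    · -- fixed-point-freeness of each monodromy
      intro i p heq
      by_cases h : (i : ℕ) < n
      · rw [dm_lt i h] at heq
        exact hext.maniplex.fixfree _ p.1 (congrArg Prod.fst heq)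
      · rw [dm_eq i h] at heq
        obtain ⟨h1, h2⟩ := Prod.ext_iff.mp heq
        exact hvolt p.1 (Or.inl h1) (by simpa using h2)
    · -- fixed-point-freeness of products of two distinct monodromies
      intro i j hij p heq
      by_cases hi : (i : ℕ) < n <;> by_cases hj : (j : ℕ) < n
      · rw [dm_lt j hj, dm_lt i hi] at heq
        refine hext.maniplex.fixfree₂ ⟨(i : ℕ), hi⟩ ⟨(j : ℕ), hj⟩ ?_ p.1
          (congrArg Prod.fst heq)
        intro h
        rw [Fin.ext_iff] at h
        exact hij (Fin.ext (by simpa using h))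
      · -- i < n, j = n : r_i (rn Φ) = Φ, ξ Φ = 1
        rw [dm_eq j hj, dm_lt i hi] at heq
        obtain ⟨h1, h2⟩ := Prod.ext_iff.mp heq
        simp only at h1 h2
        have hrn : rn p.1 = r ⟨(i : ℕ), hi⟩ p.1 := by
          have h3 := congrArg (r ⟨(i : ℕ), hi⟩) h1
          rwa [hext.maniplex.invol] at h3
        exact hvolt p.1 (Or.inr ⟨_, hrn⟩) (by simpa using h2)
      · -- i = n, j < n : rn (r_j Φ) = Φ, ξ (r_j Φ) = 1
        rw [dm_lt j hj, dm_eq i hi] at heq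
        obtain ⟨h1, h2⟩ := Prod.ext_iff.mp heq
        simp only at h1 h2
        have hrn : rn (r ⟨(j : ℕ), hj⟩ p.1) =
            r ⟨(j : ℕ), hj⟩ (r ⟨(j : ℕ), hj⟩ p.1) := by
          rw [hext.maniplex.invol]
          exact h1
        exact hvolt _ (Or.inr ⟨_, hrn⟩) (by simpa using h2)
      · exact hij (Fin.ext (by have := i.isLt; have := j.isLt; omega))
    · -- commuting squares
      intro i j hdist p
      by_cases hi : (i : ℕ) < n <;> by_cases hj : (j : ℕ) < n
      · rw [dm_lt j hj, dm_lt i hi, dm_lt j hj, dm_lt i hi]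
        exact Prod.ext (hext.maniplex.sq ⟨(i : ℕ), hi⟩ ⟨(j : ℕ), hj⟩
          (by simpa using hdist) p.1) rfl
      · -- i < n, j = n; distance ≥ 2 forces i + 1 < n
        have hjn : (j : ℕ) = n := by have := j.isLt; omega
        have hin : (i : ℕ) + 1 < n := by
          rw [hjn] at hdist
          have hilt := hi
          rcases le_abs.mp hdist with h | h <;> omega
        set i' : Fin n := ⟨(i : ℕ), hi⟩ with hi'
        rw [dm_eq j hj, dm_lt i hi, dm_eq j hj, dm_lt i hi]
        simp only
        have hc : ∀ x : K, rn (r i' x) = r i' (rn x) := hext.rn_comm i' hin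
        have hK : r i' (rn (r i' (rn p.1))) = p.1 := by
          rw [← hc, hext.maniplex.invol, hext.rn_invol]
        refine Prod.ext hK ?_
        simp only
        have hξ : ξ (r i' (rn p.1)) = (ξ p.1)⁻¹ := by
          rw [xi_r hext i' hin, hext.voltage_inv]
        rw [hξ, inv_mul_cancel_left]
      · -- i = n, j < n
        have hin : (i : ℕ) = n := by have := i.isLt; omega
        have hjn : (j : ℕ) + 1 < n := by
          rw [hin] at hdist
          have hjlt := hj
          rcases le_abs.mp hdist with h | h <;> omega
        set j' : Fin n := ⟨(j : ℕ), hj⟩ with hj'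
        rw [dm_lt j hj, dm_eq i hi, dm_lt j hj, dm_eq i hi]
        simp only
        have hc : ∀ x : K, rn (r j' x) = r j' (rn x) := hext.rn_comm j' hjn
        have hK : rn (r j' (rn (r j' p.1))) = p.1 := by
          rw [← hc, hext.maniplex.invol, hext.rn_invol]
        refine Prod.ext hK ?_
        simp only
        have hξ : ξ (r j' (rn (r j' p.1))) = (ξ (r j' p.1))⁻¹ := by
          rw [← hc, hext.maniplex.invol, hext.voltage_inv, xi_r hext j' hjn]
        rw [hξ, xi_r hext j' hjn, inv_mul_cancel_left]
      · have h1 := i.isLt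
        have h2 := j.isLt
        have hij' : ((i : ℕ) : ℤ) = ((j : ℕ) : ℤ) := by omega
        rw [hij', sub_self, abs_zero] at hdist
        omega
    · -- connectivity
      rintro ⟨Φ, g⟩ ⟨Ψ, h⟩
      have h1 : ReachOn (derivedMono r rn ξ) (fun _ => True) (Φ, g) (Φ, (h * g⁻¹) * g) :=
        move_group hext (hgen ▸ Subgroup.mem_top _) Φ g
      rw [inv_mul_cancel_right] at h1
      exact h1.trans (lift_reach (hext.maniplex.conn Φ Ψ) h)
end

section
/- Let M be a regular polytopal n-maniplex with base flag Φ, distinguished generators ρ_0, …, ρ_{n−1}, let N be the normal closure of ⟨ρ_{n−1}⟩ in Aut(M), and let Γ_{n−1} = ⟨ρ_0, …, ρ_{n−2}⟩. Then Aut(M) is the internal semidirect product of N and Γ_{n−1} (that is, N is normal in Aut(M), Aut(M) = N·Γ_{n−1}, and N ∩ Γ_{n−1} = {1}) — the Flat Amalgamation Property with respect to the facets — if and only if M is a canonical Cayley extension. -/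
section Statement4Aux

variable {M : Type*} {n : ℕ} {r : Fin (n + 1) → M → M}

lemma mem_autGroup_iff {τ : Equiv.Perm M} :
    τ ∈ autGroup r ↔ ∀ (i : Fin (n + 1)) (x : M), τ (r i x) = r i (τ x) := Iff.rfl

lemma reach_map {P : Fin (n + 1) → Prop} {τ : Equiv.Perm M} (hτ : τ ∈ autGroup r)
    {x y : M} (h : ReachOn r P x y) : ReachOn r P (τ x) (τ y) := by
  induction h with
  | refl => exact Relation.ReflTransGen.refl
  | tail _ step ih =>
    obtain ⟨i, hi, hstep⟩ := step
    exact ih.tail ⟨i, hi, by rw [← (mem_autGroup_iff.mp hτ) i, hstep]⟩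

lemma reach_symm (hinv : ∀ i, Function.Involutive (r i)) {P : Fin (n + 1) → Prop}
    {x y : M} (h : ReachOn r P x y) : ReachOn r P y x := by
  induction h with
  | refl => exact Relation.ReflTransGen.refl
  | tail _ step ih =>
    obtain ⟨i, hi, hstep⟩ := step
    exact Relation.ReflTransGen.head ⟨i, hi, by rw [← hstep]; exact hinv i _⟩ ih

lemma aut_eq_of_agree (hM : IsManiplex (n + 1) r) {τ σ : Equiv.Perm M}
    (hτ : τ ∈ autGroup r) (hσ : σ ∈ autGroup r) {x : M} (hx : τ x = σ x) : τ = σ := by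
  ext y
  induction hM.conn x y with
  | refl => exact hx
  | tail _ step ih =>
    obtain ⟨i, _, hstep⟩ := step
    rw [← hstep, mem_autGroup_iff.mp hτ, mem_autGroup_iff.mp hσ, ih]

lemma subgroup_conj_apply {A : Subgroup (Equiv.Perm M)} (a b : ↥A) (x : M) :
    ((a * b * a⁻¹ : ↥A) : Equiv.Perm M) ((a : Equiv.Perm M) x)
      = (a : Equiv.Perm M) ((b : Equiv.Perm M) x) := by
  simp [Equiv.Perm.mul_apply]

lemma closure_reach (hinv : ∀ i, Function.Involutive (r i)) (Φ : M)
    (ρ : Fin (n + 1) → Equiv.Perm M)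
    (hρmem : ∀ i, ρ i ∈ autGroup r) (hρ : ∀ i, ρ i Φ = r i Φ)
    (P : Fin (n + 1) → Prop) {γ : ↥(autGroup r)}
    (hγ : γ ∈ Subgroup.closure
      {τ : ↥(autGroup r) | ∃ i, P i ∧ τ = ⟨ρ i, hρmem i⟩}) :
    ReachOn r P Φ ((γ : Equiv.Perm M) Φ) := by
  induction hγ using Subgroup.closure_induction with
  | mem τ hτ =>
    obtain ⟨i, hi, rfl⟩ := hτ
    exact Relation.ReflTransGen.single ⟨i, hi, (hρ i).symm⟩
  | one => exact Relation.ReflTransGen.refl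
  | mul a b _ _ iha ihb =>
    exact iha.trans (reach_map a.2 ihb)
  | inv a _ iha =>
    have h1 := reach_symm hinv (reach_map (a⁻¹ : ↥(autGroup r)).2 iha)
    simpa using h1

lemma reach_to_closure (hM : IsManiplex (n + 1) r) (Φ : M)
    (ρ : Fin (n + 1) → Equiv.Perm M)
    (hρmem : ∀ i, ρ i ∈ autGroup r) (hρ : ∀ i, ρ i Φ = r i Φ)
    {P : Fin (n + 1) → Prop} {x y : M} (h : ReachOn r P x y) :
    ∀ α : ↥(autGroup r), (α : Equiv.Perm M) Φ = x →
      ∃ γ ∈ Subgroup.closure {τ : ↥(autGroup r) | ∃ i, P i ∧ τ = ⟨ρ i, hρmem i⟩},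
        ((α * γ : ↥(autGroup r)) : Equiv.Perm M) Φ = y := by
  induction h with
  | refl => exact fun α hα => ⟨1, one_mem _, by simpa using hα⟩
  | tail _ step ih =>
    intro α hα
    obtain ⟨γ, hγ, hEq⟩ := ih α hα
    obtain ⟨i, hi, hstep⟩ := step
    refine ⟨γ * ⟨ρ i, hρmem i⟩, mul_mem hγ (Subgroup.subset_closure ⟨i, hi, rfl⟩), ?_⟩
    have h2 : ((α * (γ * ⟨ρ i, hρmem i⟩) : ↥(autGroup r)) : Equiv.Perm M) Φ
        = ((α * γ : ↥(autGroup r)) : Equiv.Perm M) (ρ i Φ) := rfl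
    rw [h2, hρ i, mem_autGroup_iff.mp (α * γ).2, hEq, hstep]

end Statement4Aux

open scoped Pointwise in
/-- For a regular polytopal maniplex (of rank `n+1`), `Aut(M)` is the
internal semidirect product of the normal closure `N` of `⟨ρ_n⟩` and `Γ = ⟨ρ_0, …, ρ_{n-1}⟩`
(the Flat Amalgamation Property) iff `M` is a canonical Cayley extension. -/
theorem statement4 {M : Type*} {n : ℕ} (r : Fin (n + 1) → M → M)
    (hM : IsManiplex (n + 1) r) (hpoly : IsPolytopal r)
    (hreg : ∀ x y : M, ∃ τ ∈ autGroup r, τ x = y)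
    (Φ : M) (ρ : Fin (n + 1) → Equiv.Perm M)
    (hρmem : ∀ i, ρ i ∈ autGroup r)
    (hρ : ∀ i, ρ i Φ = r i Φ) :
    ((Subgroup.normalClosure
          ({⟨ρ (Fin.last n), hρmem (Fin.last n)⟩} : Set ↥(autGroup r))).Normal ∧
      Subgroup.normalClosure ({⟨ρ (Fin.last n), hρmem (Fin.last n)⟩} : Set ↥(autGroup r)) ⊓
          Subgroup.closure {τ : ↥(autGroup r) | ∃ i : Fin n, τ = ⟨ρ i.castSucc, hρmem i.castSucc⟩} =
        ⊥ ∧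
      Subgroup.normalClosure ({⟨ρ (Fin.last n), hρmem (Fin.last n)⟩} : Set ↥(autGroup r)) ⊔
          Subgroup.closure {τ : ↥(autGroup r) | ∃ i : Fin n, τ = ⟨ρ i.castSucc, hρmem i.castSucc⟩} =
        ⊤) ↔
      ∃ H : Subgroup (Equiv.Perm M),
        (H : Set (Equiv.Perm M)) ⊆ ↑(autGroup r) ∧
        (∀ Ψ₁ Ψ₂ : M, ∃ τ ∈ H, FacetRel r (τ Ψ₁) Ψ₂) ∧
        (∀ τ ∈ H, (∃ Ψ : M, FacetRel r Ψ (τ Ψ)) → τ = 1) ∧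
        (∀ Ψ : M, ∃ τ ∈ H, r (Fin.last n) Ψ = τ Ψ) := by
  classical
  have hinv := hM.invol
  set gL : ↥(autGroup r) := ⟨ρ (Fin.last n), hρmem (Fin.last n)⟩ with hgL
  set N := Subgroup.normalClosure ({gL} : Set ↥(autGroup r)) with hN
  set Γ := Subgroup.closure
    {τ : ↥(autGroup r) | ∃ i : Fin n, τ = ⟨ρ i.castSucc, hρmem i.castSucc⟩} with hΓ
  have hnormal : N.Normal := Subgroup.normalClosure_normal
  -- Γ as a closure indexed by a predicate
  have hΓ_eq : Γ = Subgroup.closure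
      {τ : ↥(autGroup r) | ∃ i : Fin (n + 1), ((i : ℕ) + 1 < n + 1) ∧ τ = ⟨ρ i, hρmem i⟩} := by
    apply le_antisymm
    · rw [hΓ]
      refine (Subgroup.closure_le _).mpr ?_
      rintro τ ⟨j, rfl⟩
      exact Subgroup.subset_closure ⟨j.castSucc, by simp, rfl⟩
    · refine (Subgroup.closure_le _).mpr ?_
      rintro τ ⟨i, hi, rfl⟩
      have hi' : (i : ℕ) < n := by omega
      have hic : i = (⟨(i : ℕ), hi'⟩ : Fin n).castSucc := by ext; simp
      rw [hΓ]
      exact Subgroup.subset_closure ⟨⟨(i : ℕ), hi'⟩, by rw [← hic]⟩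
  have hΓfacet : ∀ γ : ↥(autGroup r), γ ∈ Γ → FacetRel r Φ ((γ : Equiv.Perm M) Φ) := by
    intro γ hγ
    rw [hΓ_eq] at hγ
    exact closure_reach hinv Φ ρ hρmem hρ _ hγ
  -- every automorphism lies in the closure of all the ρ i
  have hall : ∀ τ : ↥(autGroup r), τ ∈ Subgroup.closure
      {σ : ↥(autGroup r) | ∃ i, True ∧ σ = ⟨ρ i, hρmem i⟩} := by
    intro τ
    obtain ⟨γ, hγ, hEq⟩ := reach_to_closure hM Φ ρ hρmem hρ (P := fun _ => True)
      (hM.conn Φ ((τ : Equiv.Perm M) Φ)) 1 (by simp)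
    have hv : (γ : Equiv.Perm M) = (τ : Equiv.Perm M) := by
      apply aut_eq_of_agree hM γ.2 τ.2 (x := Φ)
      simpa using hEq
    rwa [show γ = τ from Subtype.ext hv] at hγ
  have htop : N ⊔ Γ = ⊤ := by
    rw [eq_top_iff]
    intro τ _
    refine (Subgroup.closure_le _).mpr ?_ (hall τ)
    rintro σ ⟨i, -, rfl⟩
    by_cases h : (i : ℕ) < n
    · have hic : i = (⟨(i : ℕ), h⟩ : Fin n).castSucc := by ext; simp
      have hmem : (⟨ρ i, hρmem i⟩ : ↥(autGroup r)) ∈ Γ := by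
        rw [hΓ]
        exact Subgroup.subset_closure ⟨⟨(i : ℕ), h⟩, by rw [← hic]⟩
      exact SetLike.mem_coe.mpr (Subgroup.mem_sup_right hmem)
    · have hval : (i : ℕ) = n := by have := i.isLt; omega
      have hic : i = Fin.last n := by ext; simpa using hval
      have hmem : (⟨ρ i, hρmem i⟩ : ↥(autGroup r)) ∈ N := by
        rw [hN]
        apply Subgroup.subset_normalClosure
        rw [Set.mem_singleton_iff, hgL]
        exact Subtype.ext (by rw [hic])
      exact SetLike.mem_coe.mpr (Subgroup.mem_sup_left hmem)
  constructor
  · rintro ⟨-, hinf, -⟩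
    refine ⟨Subgroup.map (autGroup r).subtype N, ?_, ?_, ?_, ?_⟩
    · intro x hx
      rw [SetLike.mem_coe, Subgroup.mem_map] at hx
      obtain ⟨ν, _, rfl⟩ := hx
      exact ν.2
    · intro Ψ₁ Ψ₂
      obtain ⟨σ₁, hσ₁A, hσ₁⟩ := hreg Φ Ψ₁
      obtain ⟨σ₂, hσ₂A, hσ₂⟩ := hreg Φ Ψ₂
      set s₁ : ↥(autGroup r) := ⟨σ₁, hσ₁A⟩ with hs₁
      set s₂ : ↥(autGroup r) := ⟨σ₂, hσ₂A⟩ with hs₂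
      have hmem : s₂⁻¹ * s₁ ∈ ((N : Set ↥(autGroup r)) * (Γ : Set ↥(autGroup r))) := by
        rw [← Subgroup.normal_mul, htop]
        simp
      obtain ⟨ν, hν, γ, hγ, hprod⟩ := hmem
      refine ⟨((s₂ * ν⁻¹ * s₂⁻¹ : ↥(autGroup r)) : Equiv.Perm M),
        Subgroup.mem_map.mpr ⟨s₂ * ν⁻¹ * s₂⁻¹, hnormal.conj_mem _ (inv_mem hν) s₂, rfl⟩, ?_⟩
      have hkey : (s₂ * ν⁻¹ * s₂⁻¹) * s₁ = s₂ * γ := by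
        have hprod' : ν * γ = s₂⁻¹ * s₁ := hprod
        have hs : s₁ = s₂ * (ν * γ) := by
          rw [hprod']; group
        rw [hs]; group
      have hfr2 := reach_map hσ₂A (hΓfacet γ hγ)
      have hτΨ : ((s₂ * ν⁻¹ * s₂⁻¹ : ↥(autGroup r)) : Equiv.Perm M) Ψ₁
          = σ₂ ((γ : Equiv.Perm M) Φ) := by
        rw [← hσ₁]
        have := congrArg (fun t : ↥(autGroup r) => (t : Equiv.Perm M) Φ) hkey
        exact this
      rw [hτΨ, ← hσ₂]
      exact reach_symm hinv hfr2
    · rintro τ hτ ⟨Ψ, hΨ⟩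
      rw [Subgroup.mem_map] at hτ
      obtain ⟨ν, hν, rfl⟩ := hτ
      obtain ⟨σ, hσA, hσ⟩ := hreg Φ Ψ
      set s : ↥(autGroup r) := ⟨σ, hσA⟩ with hs
      obtain ⟨γ, hγ, hEq⟩ := reach_to_closure hM Φ ρ hρmem hρ
        (P := fun i => (i : ℕ) + 1 < n + 1) hΨ s hσ
      have h1 : ((s * γ : ↥(autGroup r)) : Equiv.Perm M)
          = ((ν * s : ↥(autGroup r)) : Equiv.Perm M) := by
        apply aut_eq_of_agree hM (s * γ).2 (ν * s).2 (x := Φ)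
        rw [hEq]
        show (ν : Equiv.Perm M) Ψ = (ν : Equiv.Perm M) (σ Φ)
        rw [hσ]
      have h2 : s * γ = ν * s := Subtype.ext h1
      have hγN : γ ∈ N := by
        have hγeq : γ = s⁻¹ * (ν * s) := by rw [← h2]; group
        rw [hγeq]
        have := hnormal.conj_mem ν hν s⁻¹
        simpa [mul_assoc] using this
      have hγΓ : γ ∈ Γ := by rw [hΓ_eq]; exact hγ
      have hgbot : γ ∈ N ⊓ Γ := ⟨hγN, hγΓ⟩
      rw [hinf, Subgroup.mem_bot] at hgbot
      have hν1 : ν = 1 := by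
        have h3 : ν * s = s := by rw [← h2, hgbot, mul_one]
        exact mul_eq_right.mp h3
      rw [hν1, map_one]
    · intro Ψ
      obtain ⟨σ, hσA, hσ⟩ := hreg Φ Ψ
      set s : ↥(autGroup r) := ⟨σ, hσA⟩ with hs
      refine ⟨((s * gL * s⁻¹ : ↥(autGroup r)) : Equiv.Perm M),
        Subgroup.mem_map.mpr ⟨s * gL * s⁻¹,
          hnormal.conj_mem _ (Subgroup.subset_normalClosure rfl) s, rfl⟩, ?_⟩
      rw [← hσ, subgroup_conj_apply]
      show r (Fin.last n) (σ Φ) = σ (ρ (Fin.last n) Φ)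
      rw [hρ, ← mem_autGroup_iff.mp hσA]
  · rintro ⟨H, hsub, htrans, hfree, hlast⟩
    refine ⟨hnormal, ?_, htop⟩
    have hNH : N ≤ H.comap (autGroup r).subtype := by
      refine (Subgroup.closure_le _).mpr ?_
      intro a ha
      rw [SetLike.mem_coe, Subgroup.mem_comap]
      obtain ⟨b, hb, hconj⟩ := Group.mem_conjugatesOfSet_iff.mp ha
      rw [Set.mem_singleton_iff] at hb; subst hb
      obtain ⟨c, hc⟩ := isConj_iff.mp hconj
      subst hc
      obtain ⟨τ, hτH, hτ⟩ := hlast ((c : Equiv.Perm M) Φ)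
      have hτA : τ ∈ autGroup r := hsub hτH
      have heq : ((c * gL * c⁻¹ : ↥(autGroup r)) : Equiv.Perm M) = τ := by
        apply aut_eq_of_agree hM (c * gL * c⁻¹).2 hτA (x := (c : Equiv.Perm M) Φ)
        rw [subgroup_conj_apply, ← hτ]
        show (c : Equiv.Perm M) (ρ (Fin.last n) Φ)
          = r (Fin.last n) ((c : Equiv.Perm M) Φ)
        rw [hρ, ← mem_autGroup_iff.mp c.2]
      show ((c * gL * c⁻¹ : ↥(autGroup r)) : Equiv.Perm M) ∈ H
      rw [heq]; exact hτH
    rw [eq_bot_iff]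
    intro x hx
    rw [Subgroup.mem_inf] at hx
    obtain ⟨hxN, hxΓ⟩ := hx
    have hxH : (x : Equiv.Perm M) ∈ H := hNH hxN
    have hx1 : (x : Equiv.Perm M) = 1 := hfree _ hxH ⟨Φ, hΓfacet x hxΓ⟩
    exact Subgroup.mem_bot.mpr (Subtype.ext hx1)
end

section
/- Let (K, ξ) be a canonical Cayley extender (a Cayley extender with r_n = Id) whose derived graph K^ξ is an (n+1)-maniplex. Then K^ξ is polytopal if and only if K is polytopal. -/
lemma reach_mono' {K : Type*} {n : ℕ} {r : Fin n → K → K} {P Q : Fin n → Prop}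
    (h : ∀ i, P i → Q i) {x y : K} (hr : ReachOn r P x y) : ReachOn r Q x y :=
  Relation.ReflTransGen.mono (fun _ _ ⟨i, hi, he⟩ => ⟨i, h i hi, he⟩) _ _ hr

lemma reach_lift' {K G : Type*} [Group G] {n : ℕ} {r : Fin n → K → K} {ξ : K → G}
    {P : Fin n → Prop} {Q : Fin (n + 1) → Prop}
    (hPQ : ∀ i : Fin n, P i → Q i.castSucc) (g : G) {x y : K}
    (h : ReachOn r P x y) :
    ReachOn (derivedMono r id ξ) Q (x, g) (y, g) := by
  refine Relation.ReflTransGen.lift (fun z => (z, g)) (fun a b hab => ?_) _ _ h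
  obtain ⟨i, hi, rfl⟩ := hab
  show StepOn (derivedMono r id ξ) Q (a, g) (r i a, g)
  exact ⟨i.castSucc, hPQ i hi, by simp [derivedMono, i.isLt]⟩

lemma reach_proj' {K G : Type*} [Group G] {n : ℕ} {r : Fin n → K → K} {ξ : K → G}
    {P : Fin (n + 1) → Prop} {Q : Fin n → Prop}
    (hPQ : ∀ (j : Fin (n + 1)) (h : (j : ℕ) < n), P j → Q ⟨j, h⟩)
    {p q : K × G} (h : ReachOn (derivedMono r id ξ) P p q) :
    ReachOn r Q p.1 q.1 := by
  induction h with
  | refl => exact .refl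
  | tail _ hstep ih =>
      obtain ⟨j, hj, rfl⟩ := hstep
      by_cases hlt : (j : ℕ) < n
      · exact ih.tail ⟨⟨j, hlt⟩, hPQ j hlt hj, by simp [derivedMono, hlt]⟩
      · simpa [derivedMono, hlt] using ih

lemma snd_const' {K G : Type*} [Group G] {n : ℕ} {r : Fin n → K → K} {ξ : K → G}
    {P : Fin (n + 1) → Prop} (hP : ∀ j, P j → (j : ℕ) < n)
    {p q : K × G} (h : ReachOn (derivedMono r id ξ) P p q) : p.2 = q.2 := by
  induction h with
  | refl => rfl
  | tail _ hstep ih =>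
      obtain ⟨j, hj, rfl⟩ := hstep
      simp [derivedMono, hP j hj, ih]

/-- The derived graph of a canonical Cayley extender (`r_n = id`) is
polytopal iff `K` is polytopal. -/
theorem statement6 {K G : Type*} [Group G] {n : ℕ}
    (r : Fin n → K → K) (ξ : K → G)
    (hext : IsCayleyExtender r id ξ)
    (hman : IsManiplex (n + 1) (derivedMono r id ξ)) :
    IsPolytopal (derivedMono r id ξ) ↔ IsPolytopal r := by
  constructor
  · intro hD x y k l hkl hln h1 h2
    have h1' : ReachOn (derivedMono r id ξ) (fun j => k ≤ (j : ℕ)) (x, (1 : G)) (y, 1) :=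
      reach_lift' (fun i hi => by simpa using hi) 1 h1
    have h2' : ReachOn (derivedMono r id ξ) (fun j => (j : ℕ) ≤ l) (x, (1 : G)) (y, 1) :=
      reach_lift' (fun i hi => by simpa using hi) 1 h2
    have h3 := hD (x, 1) (y, 1) k l hkl (hln.trans (Nat.lt_succ_self n)) h1' h2'
    exact reach_proj' (fun j hj hPj => by simpa using hPj) h3
  · intro hK p q k l hkl hl h1 h2
    obtain ⟨px, pg⟩ := p
    obtain ⟨qx, qg⟩ := q
    by_cases hln : l < n
    · have hg : pg = qg := snd_const' (fun j hj => lt_of_le_of_lt hj hln) h2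
      subst hg
      have h1' : ReachOn r (fun i => k ≤ (i : ℕ)) px qx :=
        reach_proj' (fun j hj hPj => hPj) h1
      have h2' : ReachOn r (fun i => (i : ℕ) ≤ l) px qx :=
        reach_proj' (fun j hj hPj => hPj) h2
      have h3 := hK px qx k l hkl hln h1' h2'
      exact reach_lift' (fun i hi => by simpa using hi) pg h3
    · have hl' : l = n := by omega
      refine reach_mono' (fun j hj => ⟨hj, ?_⟩) h1
      omega
end

section
/- Let (K, r_n, ξ) be a Cayley extender with voltage group G whose derived graph K_{r_n}^ξ is an (n+1)-maniplex, and suppose every automorphism of K commutes with r_n (i.e. Aut(K_{r_n}) = Aut(K)). Then every automorphism of K_{r_n}^ξ projects to K_{r_n}: for every automorphism τ̄ of K_{r_n}^ξ there exists τ ∈ Aut(K) (which then commutes with r_n) such that for every flag Φ of K and every g ∈ G, the first coordinate of (Φ, g)τ̄ equals Φτ. -/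
/-- If every automorphism of `K` commutes with `r_n` (so that
`Aut(K_{r_n}) = Aut(K)`), then every automorphism of `K_{r_n}^ξ` projects to `K_{r_n}`. -/
theorem statement11 {K G : Type*} [Group G] {n : ℕ}
    (r : Fin n → K → K) (rn : K → K) (ξ : K → G)
    (hext : IsCayleyExtender r rn ξ)
    (hman : IsManiplex (n + 1) (derivedMono r rn ξ))
    (hAutEq : ∀ τ ∈ autGroup r, ∀ x : K, τ (rn x) = rn (τ x)) :
    ∀ τb ∈ autGroup (derivedMono r rn ξ),
      ∃ τ ∈ autGroup r, (∀ x : K, τ (rn x) = rn (τ x)) ∧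
        ∀ (Φ : K) (g : G), (τb (Φ, g)).1 = τ Φ :=  by
  intro τb hτb
  obtain ⟨Φ0⟩ := hext.maniplex.nonempty
  have hτb' : ∀ (i : Fin (n + 1)) (x : K × G),
      τb (derivedMono r rn ξ i x) = derivedMono r rn ξ i (τb x) := hτb
  have hslow : ∀ (i : Fin n) (p : K × G),
      derivedMono r rn ξ (Fin.castSucc i) p = (r i p.1, p.2) := by
    intro i p
    simp [derivedMono, i.isLt]
  have hsn : ∀ p : K × G, derivedMono r rn ξ (Fin.last n) p = (rn p.1, ξ p.1 * p.2) := by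
    intro p
    simp [derivedMono]
  have hcomm1 : ∀ (i : Fin n) (p : K × G),
      τb (r i p.1, p.2) = (r i (τb p).1, (τb p).2) := by
    intro i p
    have h := hτb' (Fin.castSucc i) p
    rw [hslow, hslow] at h
    exact h
  have hcommn : ∀ p : K × G,
      τb (rn p.1, ξ p.1 * p.2) = (rn (τb p).1, ξ (τb p).1 * (τb p).2) := by
    intro p
    have h := hτb' (Fin.last n) p
    rw [hsn, hsn] at h
    exact h
  have hτbs : ∀ (i : Fin (n + 1)) (x : K × G),
      τb.symm (derivedMono r rn ξ i x) = derivedMono r rn ξ i (τb.symm x) := by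
    intro i x
    have h := hτb' i (τb.symm x)
    rw [Equiv.apply_symm_apply] at h
    exact τb.symm_apply_eq.mpr h.symm
  have hcomm1s : ∀ (i : Fin n) (p : K × G),
      τb.symm (r i p.1, p.2) = (r i (τb.symm p).1, (τb.symm p).2) := by
    intro i p
    have h := hτbs (Fin.castSucc i) p
    rw [hslow, hslow] at h
    exact h
  have hconnK : ∀ x y : K, ConnRel r x y := hext.maniplex.conn
  have hsnd : ∀ (g : G) (Φ Ψ : K), (τb (Φ, g)).2 = (τb (Ψ, g)).2 := by
    intro g Φ Ψ
    induction hconnK Φ Ψ with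
    | refl => rfl
    | tail hab hbc ih =>
      rename_i b c
      obtain ⟨i, -, rfl⟩ := hbc
      exact ih.trans (congrArg Prod.snd (hcomm1 i (b, g))).symm
  have hsnds : ∀ (g : G) (Φ Ψ : K), (τb.symm (Φ, g)).2 = (τb.symm (Ψ, g)).2 := by
    intro g Φ Ψ
    induction hconnK Φ Ψ with
    | refl => rfl
    | tail hab hbc ih =>
      rename_i b c
      obtain ⟨i, -, rfl⟩ := hbc
      exact ih.trans (congrArg Prod.snd (hcomm1s i (b, g))).symm
  have hbij : ∀ g : G, Function.Bijective (fun Φ : K => (τb (Φ, g)).1) := by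
    intro g
    constructor
    · intro a b hab
      have ha : τb (a, g) = τb (b, g) := Prod.ext hab (hsnd g a b)
      have := τb.injective ha
      exact congrArg Prod.fst this
    · intro Ψ
      set c := (τb (Φ0, g)).2 with hc
      have hp2 : (τb.symm (Ψ, c)).2 = g := by
        have h1 : (τb.symm ((τb (Φ0, g)).1, c)).2 = g := by
          rw [hc, Prod.mk.eta, Equiv.symm_apply_apply]
        exact (hsnds c Ψ (τb (Φ0, g)).1).trans h1
      refine ⟨(τb.symm (Ψ, c)).1, ?_⟩
      show (τb ((τb.symm (Ψ, c)).1, g)).1 = Ψ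
      rw [← hp2, Prod.mk.eta, Equiv.apply_symm_apply]
  -- the candidate projection, for each g
  have hcommT : ∀ (g : G) (i : Fin n) (x : K),
      (τb (r i x, g)).1 = r i ((τb (x, g)).1) :=
    fun g i x => congrArg Prod.fst (hcomm1 i (x, g))
  have hmem : ∀ g : G, Equiv.ofBijective _ (hbij g) ∈ autGroup r := by
    intro g
    show ∀ (i : Fin n) (x : K), _
    exact fun i x => hcommT g i x
  have hrnE : ∀ (g : G) (x : K), (τb (rn x, g)).1 = rn ((τb (x, g)).1) :=
    fun g x => hAutEq _ (hmem g) x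
  have hagree : ∀ g g' : G,
      (∃ x : K, (τb (x, g)).1 = (τb (x, g')).1) →
      ∀ y : K, (τb (y, g)).1 = (τb (y, g')).1 := by
    intro g g' ⟨x, hx⟩ y
    induction hconnK x y with
    | refl => exact hx
    | tail hab hbc ih =>
      rename_i b c
      obtain ⟨i, -, rfl⟩ := hbc
      rw [hcommT g i b, hcommT g' i b, ih]
  have hstep : ∀ (Φ : K) (g : G) (y : K),
      (τb (y, ξ Φ * g)).1 = (τb (y, g)).1 := by
    intro Φ g y
    refine hagree (ξ Φ * g) g ⟨rn Φ, ?_⟩ y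
    have h1 : (τb (rn Φ, ξ Φ * g)).1 = rn ((τb (Φ, g)).1) :=
      congrArg Prod.fst (hcommn (Φ, g))
    rw [h1, ← hrnE g Φ]
  have hglob : ∀ p q : K × G, ConnRel (derivedMono r rn ξ) p q →
      ∀ y : K, (τb (y, p.2)).1 = (τb (y, q.2)).1 := by
    intro p q h
    induction h with
    | refl => exact fun y => rfl
    | tail hab hbc ih =>
      rename_i b c
      obtain ⟨i, -, rfl⟩ := hbc
      intro y
      rw [ih y]
      by_cases hi : (i : ℕ) < n
      · have : (derivedMono r rn ξ i b).2 = b.2 := by simp [derivedMono, hi]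
        rw [this]
      · have : (derivedMono r rn ξ i b).2 = ξ b.1 * b.2 := by simp [derivedMono, hi]
        rw [this]
        exact (hstep b.1 b.2 y).symm
  refine ⟨Equiv.ofBijective _ (hbij 1), hmem 1, fun x => hAutEq _ (hmem 1) x, ?_⟩
  intro Φ g
  show (τb (Φ, g)).1 = (τb (Φ, 1)).1
  exact (hglob (Φ, 1) (Φ, g) (hman.conn (Φ, 1) (Φ, g)) Φ).symm
end

section
/- Let K be an n-maniplex. All the universal Cayley extensions of K are pairwise isomorphic — i.e., for any two pre-extenders (K, r_n) and (K, r_n′) there is an isomorphism of (n+1)-maniplexes between U(K, r_n) and U(K, r_n′) — if and only if both of the following hold: (a) for any two distinct facets F ≠ F′ of K, every isomorphism σ : F → F′ (a bijection between the flag sets of F and F′ satisfying σ(r_i Φ) = r_i σ(Φ) for every Φ ∈ F and every i ≤ n−2) extends to an automorphism of K (there is τ ∈ Aut(K) with Φτ = σ(Φ) for every Φ ∈ F); and (b) every involutory automorphism of a facet F of K (a bijection σ : F → F with σ∘σ = Id satisfying σ(r_i Φ) = r_i σ(Φ) for every Φ ∈ F and every i ≤ n−2) extends to an automorphism of K. 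-/
/-! ## Auxiliary machinery for Statement 19 -/

namespace S19

open Function

variable {K : Type*} {n : ℕ} {r : Fin n → K → K}

lemma mem_autGroup_iff {τ : Equiv.Perm K} :
    τ ∈ autGroup r ↔ ∀ (i : Fin n) (x : K), τ (r i x) = r i (τ x) := Iff.rfl

lemma ReachOn.mapAux {P : Fin n → Prop} {f : K → K}
    (hf : ∀ i, P i → ∀ x, f (r i x) = r i (f x)) {x y : K}
    (h : ReachOn r P x y) : ReachOn r P (f x) (f y) := by
  induction h with
  | refl => exact Relation.ReflTransGen.refl
  | tail hxy hstep ih =>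
    obtain ⟨i, hPi, hi⟩ := hstep
    exact ih.tail ⟨i, hPi, by rw [← hi, hf i hPi]⟩

lemma StepOn.symmAux (hinv : ∀ i, Function.Involutive (r i)) {P : Fin n → Prop} {x y : K}
    (h : StepOn r P x y) : StepOn r P y x := by
  obtain ⟨i, hPi, hi⟩ := h
  exact ⟨i, hPi, by rw [← hi, hinv i]⟩

lemma ReachOn.symmAux (hinv : ∀ i, Function.Involutive (r i)) {P : Fin n → Prop} {x y : K}
    (h : ReachOn r P x y) : ReachOn r P y x := by
  induction h with
  | refl => exact Relation.ReflTransGen.refl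
  | tail hxy hstep ih => exact Relation.ReflTransGen.head (StepOn.symmAux hinv hstep) ih

lemma FacetRel.refl (x : K) : FacetRel r x x := Relation.ReflTransGen.refl

lemma FacetRel.trans {x y z : K} (h : FacetRel r x y) (h' : FacetRel r y z) :
    FacetRel r x z := Relation.ReflTransGen.trans h h'

lemma FacetRel.symm (hinv : ∀ i, Function.Involutive (r i)) {x y : K}
    (h : FacetRel r x y) : FacetRel r y x := ReachOn.symmAux hinv h

lemma facetRel_step {j : Fin n} (hj : (j : ℕ) + 1 < n) (Φ : K) :
    FacetRel r Φ (r j Φ) := Relation.ReflTransGen.single ⟨j, hj, rfl⟩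

/-- automorphisms agreeing at a flag agree everywhere (rigidity). -/
lemma aut_eq_on (hK : IsManiplex n r) {τ σ : K → K}
    (hτ : ∀ (i : Fin n) (x : K), τ (r i x) = r i (τ x))
    (hσ : ∀ (i : Fin n) (x : K), σ (r i x) = r i (σ x))
    {Φ : K} (h : τ Φ = σ Φ) (Ψ : K) : τ Ψ = σ Ψ := by
  have hc := hK.conn Φ Ψ
  induction hc with
  | refl => exact h
  | tail hxy hstep ih =>
    obtain ⟨i, -, hi⟩ := hstep
    rw [← hi, hτ, hσ, ih]

lemma aut_perm_eq (hK : IsManiplex n r) {τ σ : Equiv.Perm K}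
    (hτ : τ ∈ autGroup r) (hσ : σ ∈ autGroup r) {Φ : K} (h : τ Φ = σ Φ) : τ = σ :=
  Equiv.ext fun Ψ => aut_eq_on hK hτ hσ h Ψ

/-- Apply an element of the automorphism group. -/
def apAut (q : ↥(autGroup r)) (x : K) : K := (q : Equiv.Perm K) x

lemma apAut_mul (a b : ↥(autGroup r)) (x : K) : apAut (a * b) x = apAut a (apAut b x) := rfl

lemma apAut_one (x : K) : apAut (1 : ↥(autGroup r)) x = x := rfl

lemma apAut_comm (a : ↥(autGroup r)) (i : Fin n) (x : K) :
    apAut a (r i x) = r i (apAut a x) := a.2 i x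

lemma apAut_facetRel (a : ↥(autGroup r)) {x y : K} (h : FacetRel r x y) :
    FacetRel r (apAut a x) (apAut a y) :=
  ReachOn.mapAux (fun i _ x => apAut_comm a i x) h

/-- Every pre-extender extends facet-wise to automorphisms. -/
def ExtProp (r : Fin n → K → K) (rn : K → K) : Prop :=
  ∀ Φ : K, ∃ τ : Equiv.Perm K, τ ∈ autGroup r ∧ ∀ Ψ : K, FacetRel r Φ Ψ → τ Ψ = rn Ψ

variable {rn : K → K}

noncomputable def muFun (rn : K → K) (hE : ExtProp r rn) (Φ : K) : ↥(autGroup r) :=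
  ⟨(hE Φ).choose, (hE Φ).choose_spec.1⟩

lemma muFun_spec (hE : ExtProp r rn) {Φ Ψ : K} (h : FacetRel r Φ Ψ) :
    apAut (muFun rn hE Φ) Ψ = rn Ψ := (hE Φ).choose_spec.2 Ψ h

lemma muFun_self (hE : ExtProp r rn) (Φ : K) :
    apAut (muFun rn hE Φ) Φ = rn Φ := muFun_spec hE (FacetRel.refl Φ)

lemma muFun_congr (hK : IsManiplex n r) (hE : ExtProp r rn) {Φ Ψ : K}
    (h : FacetRel r Φ Ψ) : muFun rn hE Φ = muFun rn hE Ψ := by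
  apply Subtype.ext
  apply aut_perm_eq hK (muFun rn hE Φ).2 (muFun rn hE Ψ).2 (Φ := Φ)
  have h1 : apAut (muFun rn hE Φ) Φ = rn Φ := muFun_self hE Φ
  have h2 : apAut (muFun rn hE Ψ) Φ = rn Φ := muFun_spec hE (FacetRel.symm hK.invol h)
  exact h1.trans h2.symm

lemma muFun_rn (hK : IsManiplex n r) (hrn : IsPreExtender r rn) (hE : ExtProp r rn) (Φ : K) :
    muFun rn hE (rn Φ) = (muFun rn hE Φ)⁻¹ := by
  apply Subtype.ext
  rw [InvMemClass.coe_inv]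
  apply aut_perm_eq hK (muFun rn hE (rn Φ)).2 ((autGroup r).inv_mem (muFun rn hE Φ).2)
    (Φ := rn Φ)
  have h1 : ((muFun rn hE (rn Φ) : Equiv.Perm K)) (rn Φ) = rn (rn Φ) := muFun_self hE (rn Φ)
  rw [h1, hrn.rn_invol Φ]
  have h2 : ((muFun rn hE Φ : Equiv.Perm K)) Φ = rn Φ := muFun_self hE Φ
  rw [← h2, ← Equiv.Perm.mul_apply, inv_mul_cancel, Equiv.Perm.one_apply]

lemma rel_eq_one {w : FreeGroup K} (hw : w ∈ UnivRels r rn) :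
    PresentedGroup.mk (UnivRels r rn) w = 1 :=
  (QuotientGroup.eq_one_iff w).mpr (Subgroup.subset_normalClosure hw)

lemma of_facet_eq {Φ Ψ : K} (h : FacetRel r Φ Ψ) :
    (PresentedGroup.of Φ : PresentedGroup (UnivRels r rn)) = PresentedGroup.of Ψ := by
  have h1 := rel_eq_one (r := r) (rn := rn)
    (w := FreeGroup.of Φ * (FreeGroup.of Ψ)⁻¹) (Set.mem_union_left _ ⟨Φ, Ψ, h, rfl⟩)
  rw [map_mul, map_inv] at h1
  exact mul_inv_eq_one.mp h1

lemma of_rn_eq (Φ : K) :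
    (PresentedGroup.of (rn Φ) : PresentedGroup (UnivRels r rn)) = (PresentedGroup.of Φ)⁻¹ := by
  have h1 := rel_eq_one (r := r) (rn := rn)
    (w := FreeGroup.of Φ * FreeGroup.of (rn Φ)) (Set.mem_union_right _ ⟨Φ, rfl⟩)
  rw [map_mul] at h1
  exact eq_inv_of_mul_eq_one_right h1

end S19
namespace S19

open Function

variable {K : Type*} {n : ℕ} {r : Fin n → K → K} {rn : K → K}

/-- The homomorphism from the universal voltage group to the automorphism group. -/
noncomputable def rhoHom (hK : IsManiplex n r) (hrn : IsPreExtender r rn) (hE : ExtProp r rn) :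
    PresentedGroup (UnivRels r rn) →* ↥(autGroup r) :=
  PresentedGroup.toGroup (f := muFun rn hE) (by
    rintro w (⟨Φ, Ψ, hFR, rfl⟩ | ⟨Φ, rfl⟩)
    · rw [map_mul, map_inv, FreeGroup.lift_apply_of, FreeGroup.lift_apply_of,
        muFun_congr hK hE hFR, mul_inv_cancel]
    · rw [map_mul, FreeGroup.lift_apply_of, FreeGroup.lift_apply_of, muFun_rn hK hrn hE, mul_inv_cancel])

lemma rhoHom_of (hK : IsManiplex n r) (hrn : IsPreExtender r rn) (hE : ExtProp r rn) (Φ : K) :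
    rhoHom hK hrn hE (PresentedGroup.of Φ) = muFun rn hE Φ :=
  PresentedGroup.toGroup.of _

section Construction

variable {rnA rnB : K → K}

/-- One step of the derived action. -/
noncomputable def rawDelta (hK : IsManiplex n r) (hrnA : IsPreExtender r rnA)
    (hrnB : IsPreExtender r rnB) (hEA : ExtProp r rnA) (hEB : ExtProp r rnB) (Ψ : K)
    (p : PresentedGroup (UnivRels r rnB) × ↥(autGroup r)) :
    PresentedGroup (UnivRels r rnB) × ↥(autGroup r) :=
  (PresentedGroup.of (apAut (rhoHom hK hrnB hEB p.1 * p.2) Ψ) * p.1,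
    p.2 * (muFun rnA hEA Ψ)⁻¹)

variable (hK : IsManiplex n r) (hrnA : IsPreExtender r rnA) (hrnB : IsPreExtender r rnB)
variable (hEA : ExtProp r rnA) (hEB : ExtProp r rnB)

lemma rawDelta_rawDelta (Ψ : K) (p : PresentedGroup (UnivRels r rnB) × ↥(autGroup r)) :
    rawDelta hK hrnA hrnB hEA hEB (rnA Ψ) (rawDelta hK hrnA hrnB hEA hEB Ψ p) = p := by
  obtain ⟨b, q⟩ := p
  set Z : K := apAut (rhoHom hK hrnB hEB b * q) Ψ with hZ
  have hsnd : q * (muFun rnA hEA Ψ)⁻¹ * (muFun rnA hEA (rnA Ψ))⁻¹ = q := by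
    rw [muFun_rn hK hrnA hEA, inv_inv, inv_mul_cancel_right]
  have hinner : apAut (rhoHom hK hrnB hEB (PresentedGroup.of Z * b) *
      (q * (muFun rnA hEA Ψ)⁻¹)) (rnA Ψ) = rnB Z := by
    rw [map_mul, rhoHom_of]
    have e1 : apAut (muFun rnA hEA Ψ)⁻¹ (rnA Ψ) = Ψ := by
      rw [← muFun_rn hK hrnA hEA, muFun_self hEA (rnA Ψ), hrnA.rn_invol Ψ]
    calc apAut (muFun rnB hEB Z * rhoHom hK hrnB hEB b * (q * (muFun rnA hEA Ψ)⁻¹)) (rnA Ψ)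
        = apAut (muFun rnB hEB Z)
            (apAut (rhoHom hK hrnB hEB b) (apAut q (apAut (muFun rnA hEA Ψ)⁻¹ (rnA Ψ)))) := by
          rw [mul_assoc, apAut_mul, apAut_mul, apAut_mul]
      _ = apAut (muFun rnB hEB Z) Z := by rw [e1, hZ, apAut_mul]
      _ = rnB Z := muFun_self hEB Z
  show (PresentedGroup.of (apAut (rhoHom hK hrnB hEB (PresentedGroup.of Z * b) *
      (q * (muFun rnA hEA Ψ)⁻¹)) (rnA Ψ)) * (PresentedGroup.of Z * b),
      q * (muFun rnA hEA Ψ)⁻¹ * (muFun rnA hEA (rnA Ψ))⁻¹) = (b, q)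
  rw [hinner, hsnd, of_rn_eq, inv_mul_cancel_left]

/-- The permutation of `G_B × Aut` induced by the facet of `Ψ`. -/
noncomputable def deltaPerm (Ψ : K) :
    Equiv.Perm (PresentedGroup (UnivRels r rnB) × ↥(autGroup r)) where
  toFun := rawDelta hK hrnA hrnB hEA hEB Ψ
  invFun := rawDelta hK hrnA hrnB hEA hEB (rnA Ψ)
  left_inv p := rawDelta_rawDelta hK hrnA hrnB hEA hEB Ψ p
  right_inv p := by
    have h := rawDelta_rawDelta hK hrnA hrnB hEA hEB (rnA Ψ) p
    rwa [hrnA.rn_invol Ψ] at h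

lemma deltaPerm_congr {Φ Ψ : K} (h : FacetRel r Φ Ψ) :
    deltaPerm hK hrnA hrnB hEA hEB Φ = deltaPerm hK hrnA hrnB hEA hEB Ψ := by
  apply Equiv.ext
  intro p
  show rawDelta hK hrnA hrnB hEA hEB Φ p = rawDelta hK hrnA hrnB hEA hEB Ψ p
  unfold rawDelta
  rw [of_facet_eq (apAut_facetRel _ h), muFun_congr hK hEA h]

/-- The action of `G_A` on `G_B × Aut`. -/
noncomputable def DHom :
    PresentedGroup (UnivRels r rnA) →*
      Equiv.Perm (PresentedGroup (UnivRels r rnB) × ↥(autGroup r)) :=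
  PresentedGroup.toGroup (f := deltaPerm hK hrnA hrnB hEA hEB) (by
    rintro w (⟨Φ, Ψ, hFR, rfl⟩ | ⟨Φ, rfl⟩)
    · rw [map_mul, map_inv, FreeGroup.lift_apply_of, FreeGroup.lift_apply_of,
        deltaPerm_congr hK hrnA hrnB hEA hEB hFR, mul_inv_cancel]
    · rw [map_mul, FreeGroup.lift_apply_of, FreeGroup.lift_apply_of]
      apply Equiv.ext
      intro p
      show rawDelta hK hrnA hrnB hEA hEB Φ
        (rawDelta hK hrnA hrnB hEA hEB (rnA Φ) p) = p
      have h := rawDelta_rawDelta hK hrnA hrnB hEA hEB (rnA Φ) p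
      rwa [hrnA.rn_invol Φ] at h)

/-- The target data of an element of `G_A`. -/
noncomputable def bqFun (g : PresentedGroup (UnivRels r rnA)) :
    PresentedGroup (UnivRels r rnB) × ↥(autGroup r) :=
  DHom hK hrnA hrnB hEA hEB g (1, 1)

lemma bqFun_one : bqFun hK hrnA hrnB hEA hEB 1 = (1, 1) := by
  unfold bqFun; rw [map_one]; rfl

lemma bqFun_of_mul (Φ : K) (g : PresentedGroup (UnivRels r rnA)) :
    bqFun hK hrnA hrnB hEA hEB (PresentedGroup.of Φ * g) =
      rawDelta hK hrnA hrnB hEA hEB Φ (bqFun hK hrnA hrnB hEA hEB g) := by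
  unfold bqFun
  rw [map_mul, Equiv.Perm.mul_apply]
  congr 1

/-- The equivariant map between the two universal extensions. -/
noncomputable def fMap (x : K × PresentedGroup (UnivRels r rnA)) :
    K × PresentedGroup (UnivRels r rnB) :=
  (apAut (rhoHom hK hrnB hEB (bqFun hK hrnA hrnB hEA hEB x.2).1 *
      (bqFun hK hrnA hrnB hEA hEB x.2).2) x.1,
   (bqFun hK hrnA hrnB hEA hEB x.2).1)

lemma fMap_one (Φ : K) : fMap hK hrnA hrnB hEA hEB (Φ, 1) = (Φ, 1) := by
  unfold fMap
  rw [bqFun_one]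
  show (apAut (rhoHom hK hrnB hEB 1 * 1) Φ, (1 : PresentedGroup (UnivRels r rnB))) = (Φ, 1)
  rw [map_one, mul_one, apAut_one]

lemma fMap_equivar (i : Fin (n + 1)) (x : K × PresentedGroup (UnivRels r rnA)) :
    fMap hK hrnA hrnB hEA hEB (derivedMono r rnA (univVoltage r rnA) i x) =
      derivedMono r rnB (univVoltage r rnB) i (fMap hK hrnA hrnB hEA hEB x) := by
  obtain ⟨Φ, g⟩ := x
  by_cases h : (i : ℕ) < n
  · show fMap hK hrnA hrnB hEA hEB (dite _ _ _) = _
    rw [dif_pos h]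
    show fMap hK hrnA hrnB hEA hEB (r ⟨i, h⟩ Φ, g) = dite _ _ _
    rw [dif_pos h]
    unfold fMap
    show (apAut _ (r ⟨i, h⟩ Φ), _) = (r ⟨i, h⟩ (apAut _ Φ), _)
    rw [apAut_comm]
  · show fMap hK hrnA hrnB hEA hEB (dite _ _ _) = _
    rw [dif_neg h]
    show fMap hK hrnA hrnB hEA hEB (rnA Φ, univVoltage r rnA Φ * g) = dite _ _ _
    rw [dif_neg h]
    have hbq := bqFun_of_mul hK hrnA hrnB hEA hEB Φ g
    set b := (bqFun hK hrnA hrnB hEA hEB g).1 with hb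
    set q := (bqFun hK hrnA hrnB hEA hEB g).2 with hq
    set Z : K := apAut (rhoHom hK hrnB hEB b * q) Φ with hZ
    have hbq' : bqFun hK hrnA hrnB hEA hEB (PresentedGroup.of Φ * g) =
        (PresentedGroup.of Z * b, q * (muFun rnA hEA Φ)⁻¹) := by
      rw [hbq]
      show rawDelta hK hrnA hrnB hEA hEB Φ (b, q) = _
      rfl
    have hinner : apAut (rhoHom hK hrnB hEB (PresentedGroup.of Z * b) *
        (q * (muFun rnA hEA Φ)⁻¹)) (rnA Φ) = rnB Z := by
      rw [map_mul, rhoHom_of]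
      have e1 : apAut (muFun rnA hEA Φ)⁻¹ (rnA Φ) = Φ := by
        rw [← muFun_rn hK hrnA hEA, muFun_self hEA (rnA Φ), hrnA.rn_invol Φ]
      calc apAut (muFun rnB hEB Z * rhoHom hK hrnB hEB b * (q * (muFun rnA hEA Φ)⁻¹)) (rnA Φ)
          = apAut (muFun rnB hEB Z)
              (apAut (rhoHom hK hrnB hEB b) (apAut q (apAut (muFun rnA hEA Φ)⁻¹ (rnA Φ)))) := by
            rw [mul_assoc, apAut_mul, apAut_mul, apAut_mul]
        _ = apAut (muFun rnB hEB Z) Z := by rw [e1, hZ, apAut_mul]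
        _ = rnB Z := muFun_self hEB Z
    show fMap hK hrnA hrnB hEA hEB (rnA Φ, PresentedGroup.of Φ * g) =
      (rnB ((fMap hK hrnA hrnB hEA hEB (Φ, g)).1),
        univVoltage r rnB ((fMap hK hrnA hrnB hEA hEB (Φ, g)).1) *
          (fMap hK hrnA hrnB hEA hEB (Φ, g)).2)
    unfold fMap
    rw [hbq']
    show (apAut (rhoHom hK hrnB hEB (PresentedGroup.of Z * b) *
        (q * (muFun rnA hEA Φ)⁻¹)) (rnA Φ), PresentedGroup.of Z * b) =
      (rnB (apAut (rhoHom hK hrnB hEB b * q) Φ),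
        univVoltage r rnB (apAut (rhoHom hK hrnB hEB b * q) Φ) * b)
    rw [hinner, ← hZ]
    rfl

end Construction

end S19
namespace S19

open Function

variable {K : Type*} {n : ℕ} {r : Fin n → K → K} {rn : K → K}

lemma derivedMono_castSucc (ξ : K → PresentedGroup (UnivRels r rn)) (j : Fin n)
    (p : K × PresentedGroup (UnivRels r rn)) :
    derivedMono r rn ξ j.castSucc p = (r j p.1, p.2) := by
  unfold derivedMono
  rw [dif_pos (by simpa using j.isLt)]
  simp

lemma derivedMono_last (ξ : K → PresentedGroup (UnivRels r rn))
    (p : K × PresentedGroup (UnivRels r rn)) :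
    derivedMono r rn ξ (Fin.last n) p = (rn p.1, ξ p.1 * p.2) := by
  unfold derivedMono
  rw [dif_neg (by simp)]

lemma derived_invol (hK : IsManiplex n r) (hrn : IsPreExtender r rn) (i : Fin (n + 1)) :
    Function.Involutive (derivedMono r rn (univVoltage r rn) i) := by
  intro p
  by_cases h : (i : ℕ) < n
  · show derivedMono r rn _ i (dite _ _ _) = p
    rw [dif_pos h]
    show (dite _ _ _ : K × _) = p
    rw [dif_pos h]
    show (r ⟨i, h⟩ (r ⟨i, h⟩ p.1), p.2) = p
    rw [hK.invol ⟨i, h⟩ p.1]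
  · show derivedMono r rn _ i (dite _ _ _) = p
    rw [dif_neg h]
    show (dite _ _ _ : K × _) = p
    rw [dif_neg h]
    show (rn (rn p.1), univVoltage r rn (rn p.1) * (univVoltage r rn p.1 * p.2)) = p
    rw [hrn.rn_invol p.1]
    show (p.1, PresentedGroup.of (rn p.1) * (PresentedGroup.of p.1 * p.2)) = p
    rw [of_rn_eq, inv_mul_cancel_left]

lemma derived_lift (hK : IsManiplex n r) {Φ Ψ : K} (h : ConnRel r Φ Ψ)
    (g : PresentedGroup (UnivRels r rn)) :
    ConnRel (derivedMono r rn (univVoltage r rn)) (Φ, g) (Ψ, g) := by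
  induction h with
  | refl => exact Relation.ReflTransGen.refl
  | tail hxy hstep ih =>
    obtain ⟨i, -, hi⟩ := hstep
    refine ih.tail ⟨i.castSucc, trivial, ?_⟩
    rw [derivedMono_castSucc]
    rw [hi]

lemma derived_mul_right {x y : K × PresentedGroup (UnivRels r rn)}
    (h : ConnRel (derivedMono r rn (univVoltage r rn)) x y)
    (k : PresentedGroup (UnivRels r rn)) :
    ConnRel (derivedMono r rn (univVoltage r rn)) (x.1, x.2 * k) (y.1, y.2 * k) := by
  induction h with
  | refl => exact Relation.ReflTransGen.refl
  | @tail b c hxy hstep ih =>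
    obtain ⟨i, -, hi⟩ := hstep
    refine ih.tail ⟨i, trivial, ?_⟩
    have key : derivedMono r rn (univVoltage r rn) i (b.1, b.2 * k) =
        ((derivedMono r rn (univVoltage r rn) i b).1,
          (derivedMono r rn (univVoltage r rn) i b).2 * k) := by
      by_cases h' : (i : ℕ) < n
      · simp only [derivedMono, dif_pos h']
      · simp only [derivedMono, dif_neg h', mul_assoc]
    rw [key, hi]

lemma derived_conn (hK : IsManiplex n r) (hrn : IsPreExtender r rn) (Φc : K) :
    ∀ x : K × PresentedGroup (UnivRels r rn),
      ConnRel (derivedMono r rn (univVoltage r rn)) (Φc, 1) x := by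
  set dm := derivedMono r rn (univVoltage r rn) with hdm
  have hsymm : ∀ {x y : K × PresentedGroup (UnivRels r rn)},
      ConnRel dm x y → ConnRel dm y x :=
    fun h => ReachOn.symmAux (derived_invol hK hrn) h
  set H : Subgroup (PresentedGroup (UnivRels r rn)) :=
    { carrier := {g | ∀ Ψ : K, ConnRel dm (Φc, 1) (Ψ, g)}
      one_mem' := fun Ψ => derived_lift hK (hK.conn Φc Ψ) 1
      mul_mem' := by
        intro a b ha hb Ψ
        have h1 : ConnRel dm (Φc, 1) (Φc, b) := hb Φc
        have h2 : ConnRel dm (Φc, 1) (Ψ, a) := ha Ψ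
        have h3 := derived_mul_right h2 b
        rw [one_mul] at h3
        exact h1.trans h3
      inv_mem' := by
        intro a ha Ψ
        have h1 : ConnRel dm (Φc, 1) (Φc, a) := ha Φc
        have h2 := derived_mul_right h1 a⁻¹
        rw [one_mul, mul_inv_cancel] at h2
        have h3 : ConnRel dm (Φc, 1) (Φc, a⁻¹) := hsymm h2
        exact h3.trans (derived_lift hK (hK.conn Φc Ψ) a⁻¹) } with hH
  intro x
  obtain ⟨Ψ, g⟩ := x
  have hg : g ∈ H := by
    apply PresentedGroup.generated_by
    intro Φ Ψ'
    have h1 : ConnRel dm (Φc, 1) (Φ, 1) := derived_lift hK (hK.conn Φc Φ) 1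
    have h2 : ConnRel dm (Φ, 1) (rn Φ, PresentedGroup.of Φ) := by
      refine Relation.ReflTransGen.single ⟨Fin.last n, trivial, ?_⟩
      rw [hdm, derivedMono_last]
      show (rn Φ, PresentedGroup.of Φ * 1) = _
      rw [mul_one]
    have h3 : ConnRel dm (rn Φ, PresentedGroup.of Φ) (Ψ', PresentedGroup.of Φ) :=
      derived_lift hK (hK.conn (rn Φ) Ψ') _
    exact (h1.trans h2).trans h3
  exact hg Ψ

lemma fix_of_equivar {X : Type*} {m : ℕ} (dm : Fin m → X → X) (f : X → X)
    (heq : ∀ i x, f (dm i x) = dm i (f x)) {x y : X} (hx : f x = x)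
    (hr : ConnRel dm x y) : f y = y := by
  induction hr with
  | refl => exact hx
  | tail hxy hstep ih =>
    obtain ⟨i, -, hi⟩ := hstep
    rw [← hi, heq, ih]

end S19
namespace S19

open Function

variable {K : Type*} {n : ℕ} {r : Fin n → K → K}

/-- Main construction: the isomorphism between two universal extensions, given
extendability of facet isomorphisms induced by the two pre-extenders. -/
lemma univ_iso_exists (hK : IsManiplex n r) {rnA rnB : K → K}
    (hrnA : IsPreExtender r rnA) (hrnB : IsPreExtender r rnB)
    (hEA : ExtProp r rnA) (hEB : ExtProp r rnB) :
    ∃ e : (K × PresentedGroup (UnivRels r rnA)) ≃ (K × PresentedGroup (UnivRels r rnB)),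
      ∀ (i : Fin (n + 1)) (x : K × PresentedGroup (UnivRels r rnA)),
        e (derivedMono r rnA (univVoltage r rnA) i x) =
          derivedMono r rnB (univVoltage r rnB) i (e x) := by
  obtain ⟨Φc⟩ := hK.nonempty
  set f := fMap hK hrnA hrnB hEA hEB with hf
  set f' := fMap hK hrnB hrnA hEB hEA with hf'
  have hleft : ∀ x, f' (f x) = x := by
    intro x
    refine fix_of_equivar (derivedMono r rnA (univVoltage r rnA)) (fun y => f' (f y))
      (fun i y => ?_) (x := (Φc, 1)) ?_ (derived_conn hK hrnA Φc x)
    · show f' (f (derivedMono r rnA (univVoltage r rnA) i y)) = _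
      rw [hf, hf', fMap_equivar, fMap_equivar]
    · show f' (f (Φc, 1)) = (Φc, 1)
      rw [hf, hf', fMap_one, fMap_one]
  have hright : ∀ y, f (f' y) = y := by
    intro y
    refine fix_of_equivar (derivedMono r rnB (univVoltage r rnB)) (fun x => f (f' x))
      (fun i x => ?_) (x := (Φc, 1)) ?_ (derived_conn hK hrnB Φc y)
    · show f (f' (derivedMono r rnB (univVoltage r rnB) i x)) = _
      rw [hf, hf', fMap_equivar, fMap_equivar]
    · show f (f' (Φc, 1)) = (Φc, 1)
      rw [hf, hf', fMap_one, fMap_one]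
  exact ⟨⟨f, f', hleft, hright⟩, fun i x => fMap_equivar hK hrnA hrnB hEA hEB i x⟩

/-- The extension conditions (a), (b) imply `ExtProp` for every pre-extender. -/
lemma extProp_of_conds (hK : IsManiplex n r)
    (ha : ∀ Φ₀ Ψ₀ : K, ¬FacetRel r Φ₀ Ψ₀ → ∀ σ : K → K,
        Set.BijOn σ {Φ : K | FacetRel r Φ₀ Φ} {Ψ : K | FacetRel r Ψ₀ Ψ} →
        (∀ i : Fin n, (i : ℕ) + 1 < n → ∀ Φ : K, FacetRel r Φ₀ Φ →
          σ (r i Φ) = r i (σ Φ)) →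
        ∃ τ ∈ autGroup r, ∀ Φ : K, FacetRel r Φ₀ Φ → τ Φ = σ Φ)
    (hb : ∀ Φ₀ : K, ∀ σ : K → K,
        Set.BijOn σ {Φ : K | FacetRel r Φ₀ Φ} {Φ : K | FacetRel r Φ₀ Φ} →
        (∀ Φ : K, FacetRel r Φ₀ Φ → σ (σ Φ) = Φ) →
        (∀ i : Fin n, (i : ℕ) + 1 < n → ∀ Φ : K, FacetRel r Φ₀ Φ →
          σ (r i Φ) = r i (σ Φ)) →
        ∃ τ ∈ autGroup r, ∀ Φ : K, FacetRel r Φ₀ Φ → τ Φ = σ Φ)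
    {rn : K → K} (hrn : IsPreExtender r rn) : ExtProp r rn := by
  intro Φ
  have hpres : ∀ {x y : K}, FacetRel r x y → FacetRel r (rn x) (rn y) :=
    fun h => ReachOn.mapAux (fun i hi x => hrn.rn_comm i hi x) h
  by_cases hc : FacetRel r Φ (rn Φ)
  · obtain ⟨τ, hτ, hag⟩ := hb Φ rn
      ⟨fun Ψ hΨ => hc.trans (hpres hΨ),
        (hrn.rn_invol.injective).injOn,
        fun Ψ hΨ => ⟨rn Ψ, hc.trans (hpres hΨ), hrn.rn_invol Ψ⟩⟩
      (fun Ψ _ => hrn.rn_invol Ψ)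
      (fun i hi Ψ _ => hrn.rn_comm i hi Ψ)
    exact ⟨τ, hτ, hag⟩
  · obtain ⟨τ, hτ, hag⟩ := ha Φ (rn Φ) hc rn
      ⟨fun Ψ hΨ => hpres hΨ,
        (hrn.rn_invol.injective).injOn,
        fun Ψ hΨ => ⟨rn Ψ, by
          have := hpres hΨ
          rwa [hrn.rn_invol Φ] at this, hrn.rn_invol Ψ⟩⟩
      (fun i hi Ψ _ => hrn.rn_comm i hi Ψ)
    exact ⟨τ, hτ, hag⟩

end S19
namespace S19

open Function

variable {K : Type*} {n : ℕ} {r : Fin n → K → K}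

section Extract

variable {rn rn' : K → K}

/-- restriction of the equivariance to the first `n` monodromies. -/
lemma equivar_fin
    (e : (K × PresentedGroup (UnivRels r rn)) ≃ (K × PresentedGroup (UnivRels r rn')))
    (he : ∀ (i : Fin (n + 1)) (x : K × PresentedGroup (UnivRels r rn)),
      e (derivedMono r rn (univVoltage r rn) i x) =
        derivedMono r rn' (univVoltage r rn') i (e x))
    (j : Fin n) (Φ : K) (g : PresentedGroup (UnivRels r rn)) :
    e (r j Φ, g) = (r j (e (Φ, g)).1, (e (Φ, g)).2) := by
  have h := he j.castSucc (Φ, g)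
  rw [derivedMono_castSucc, derivedMono_castSucc] at h
  exact h

lemma symm_equivar
    (e : (K × PresentedGroup (UnivRels r rn)) ≃ (K × PresentedGroup (UnivRels r rn')))
    (he : ∀ (i : Fin (n + 1)) (x : K × PresentedGroup (UnivRels r rn)),
      e (derivedMono r rn (univVoltage r rn) i x) =
        derivedMono r rn' (univVoltage r rn') i (e x))
    (i : Fin (n + 1)) (y : K × PresentedGroup (UnivRels r rn')) :
    e.symm (derivedMono r rn' (univVoltage r rn') i y) =
      derivedMono r rn (univVoltage r rn) i (e.symm y) := by
  apply e.injective
  rw [Equiv.apply_symm_apply, he, Equiv.apply_symm_apply]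

lemma symm_equivar_fin
    (e : (K × PresentedGroup (UnivRels r rn)) ≃ (K × PresentedGroup (UnivRels r rn')))
    (he : ∀ (i : Fin (n + 1)) (x : K × PresentedGroup (UnivRels r rn)),
      e (derivedMono r rn (univVoltage r rn) i x) =
        derivedMono r rn' (univVoltage r rn') i (e x))
    (j : Fin n) (Ψ : K) (g : PresentedGroup (UnivRels r rn')) :
    e.symm (r j Ψ, g) = (r j (e.symm (Ψ, g)).1, (e.symm (Ψ, g)).2) := by
  have h := symm_equivar e he j.castSucc (Ψ, g)
  rw [derivedMono_castSucc, derivedMono_castSucc] at h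
  exact h

lemma snd_const_aux (hK : IsManiplex n r) {G G' : Type*} (E : K × G → K × G')
    (hE : ∀ (j : Fin n) (Φ : K) (g : G), E (r j Φ, g) = (r j (E (Φ, g)).1, (E (Φ, g)).2))
    (g : G) (Φ Ψ : K) : (E (Φ, g)).2 = (E (Ψ, g)).2 := by
  have hc := hK.conn Φ Ψ
  induction hc with
  | refl => rfl
  | tail hxy hstep ih =>
    obtain ⟨i, -, hi⟩ := hstep
    rw [← hi, hE]
    exact ih

/-- The permutation of `K` extracted from an isomorphism of extensions, at `g`. -/
noncomputable def permOf (hK : IsManiplex n r)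
    (e : (K × PresentedGroup (UnivRels r rn)) ≃ (K × PresentedGroup (UnivRels r rn')))
    (he : ∀ (i : Fin (n + 1)) (x : K × PresentedGroup (UnivRels r rn)),
      e (derivedMono r rn (univVoltage r rn) i x) =
        derivedMono r rn' (univVoltage r rn') i (e x))
    (g : PresentedGroup (UnivRels r rn)) : Equiv.Perm K :=
  { toFun := fun Φ => (e (Φ, g)).1
    invFun := fun Ψ => (e.symm (Ψ, (e (Classical.choice hK.nonempty, g)).2)).1
    left_inv := by
      intro Φ
      set Φc : K := Classical.choice hK.nonempty with hΦc
      show (e.symm ((e (Φ, g)).1, (e (Φc, g)).2)).1 = Φ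
      have h2 : (e (Φ, g)).2 = (e (Φc, g)).2 :=
        snd_const_aux hK e (equivar_fin e he) g Φ Φc
      have h3 : ((e (Φ, g)).1, (e (Φc, g)).2) = e (Φ, g) := by rw [← h2]
      rw [h3, Equiv.symm_apply_apply]
    right_inv := by
      intro Ψ
      set Φc : K := Classical.choice hK.nonempty with hΦc
      set θ := (e (Φc, g)).2 with hθ
      show (e ((e.symm (Ψ, θ)).1, g)).1 = Ψ
      have h4 : (e.symm (Ψ, θ)).2 = g := by
        have h5 : (e.symm (Ψ, θ)).2 = (e.symm ((e (Φc, g)).1, θ)).2 :=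
          snd_const_aux hK (fun p => e.symm p) (symm_equivar_fin e he) θ Ψ (e (Φc, g)).1
        rw [h5, hθ]
        show (e.symm (e (Φc, g))).2 = g
        rw [Equiv.symm_apply_apply]
      have h7 : ((e.symm (Ψ, θ)).1, g) = e.symm (Ψ, θ) := by rw [← h4]
      rw [h7, Equiv.apply_symm_apply] }

lemma permOf_apply (hK : IsManiplex n r)
    (e : (K × PresentedGroup (UnivRels r rn)) ≃ (K × PresentedGroup (UnivRels r rn')))
    (he : ∀ (i : Fin (n + 1)) (x : K × PresentedGroup (UnivRels r rn)),
      e (derivedMono r rn (univVoltage r rn) i x) =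
        derivedMono r rn' (univVoltage r rn') i (e x))
    (g : PresentedGroup (UnivRels r rn)) (Φ : K) :
    permOf hK e he g Φ = (e (Φ, g)).1 := rfl

lemma permOf_mem (hK : IsManiplex n r)
    (e : (K × PresentedGroup (UnivRels r rn)) ≃ (K × PresentedGroup (UnivRels r rn')))
    (he : ∀ (i : Fin (n + 1)) (x : K × PresentedGroup (UnivRels r rn)),
      e (derivedMono r rn (univVoltage r rn) i x) =
        derivedMono r rn' (univVoltage r rn') i (e x))
    (g : PresentedGroup (UnivRels r rn)) :
    permOf hK e he g ∈ autGroup r := by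
  intro i x
  show (e (r i x, g)).1 = r i (e (x, g)).1
  rw [equivar_fin e he]

end Extract

end S19
namespace S19

open Function

variable {K : Type*} {n : ℕ} {r : Fin n → K → K}

lemma preext_id (hK : IsManiplex n r) : IsPreExtender r (id : K → K) :=
  ⟨hK, fun _ => rfl, fun _ _ _ => rfl⟩

lemma facetRel_back (hK : IsManiplex n r) {i : Fin n} (hi : (i : ℕ) + 1 < n) {Φ₀ Φ : K}
    (h : FacetRel r Φ₀ (r i Φ)) : FacetRel r Φ₀ Φ :=
  h.trans (Relation.ReflTransGen.single ⟨i, hi, hK.invol i Φ⟩)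

/-- A facet isomorphism between distinct facets yields a pre-extender. -/
lemma preext_swap (hK : IsManiplex n r) {Φ₀ Ψ₀ : K} (hsep : ¬FacetRel r Φ₀ Ψ₀) {σ : K → K}
    (hbij : Set.BijOn σ {Φ : K | FacetRel r Φ₀ Φ} {Ψ : K | FacetRel r Ψ₀ Ψ})
    (hcomm : ∀ i : Fin n, (i : ℕ) + 1 < n → ∀ Φ : K, FacetRel r Φ₀ Φ →
      σ (r i Φ) = r i (σ Φ)) :
    ∃ rn'' : K → K, IsPreExtender r rn'' ∧ ∀ Φ : K, FacetRel r Φ₀ Φ → rn'' Φ = σ Φ := by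
  classical
  have hne : Nonempty K := hK.nonempty
  set F : Set K := {Φ : K | FacetRel r Φ₀ Φ} with hF
  set F' : Set K := {Ψ : K | FacetRel r Ψ₀ Ψ} with hF'
  set ι : K → K := Function.invFunOn σ F with hι
  have hmem : ∀ {Φ : K}, Φ ∈ F → σ Φ ∈ F' := fun h => hbij.mapsTo h
  have hleft : ∀ {Φ : K}, Φ ∈ F → ι (σ Φ) = Φ := fun h => hbij.injOn.leftInvOn_invFunOn h
  have hright : ∀ {Ψ : K}, Ψ ∈ F' → σ (ι Ψ) = Ψ := fun h => hbij.surjOn.rightInvOn_invFunOn h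
  have himem : ∀ {Ψ : K}, Ψ ∈ F' → ι Ψ ∈ F := fun h => hbij.surjOn.mapsTo_invFunOn h
  have hdisj : ∀ {x : K}, x ∈ F → x ∈ F' → False :=
    fun hx hy => hsep (hx.trans (FacetRel.symm hK.invol hy))
  refine ⟨fun Φ => if Φ ∈ F then σ Φ else if Φ ∈ F' then ι Φ else Φ, ⟨hK, ?_, ?_⟩,
    fun Φ h => if_pos h⟩
  · intro Φ
    beta_reduce
    by_cases h1 : Φ ∈ F
    · rw [if_pos h1, if_neg (fun h => hdisj h (hmem h1)), if_pos (hmem h1)]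
      exact hleft h1
    · rw [if_neg h1]
      by_cases h2 : Φ ∈ F'
      · rw [if_pos h2, if_pos (himem h2)]
        exact hright h2
      · rw [if_neg h2, if_neg h1, if_neg h2]
  · intro i hi x
    by_cases h1 : x ∈ F
    · have h1' : r i x ∈ F := h1.trans (facetRel_step hi x)
      rw [if_pos h1', if_pos h1]
      exact hcomm i hi x h1
    · by_cases h2 : x ∈ F'
      · have h2' : r i x ∈ F' := h2.trans (facetRel_step hi x)
        have h1' : r i x ∉ F := fun h => h1 (facetRel_back hK hi h)
        rw [if_neg h1', if_pos h2', if_neg h1, if_pos h2]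
        apply hbij.injOn (himem h2') ((himem h2).trans (facetRel_step hi (ι x)))
        rw [hright h2', hcomm i hi (ι x) (himem h2), hright h2]
      · have h1' : r i x ∉ F := fun h => h1 (facetRel_back hK hi h)
        have h2' : r i x ∉ F' := fun h => h2 (facetRel_back hK hi h)
        rw [if_neg h1', if_neg h2', if_neg h1, if_neg h2]

/-- An involutory facet automorphism yields a pre-extender. -/
lemma preext_fix (hK : IsManiplex n r) {Φ₀ : K} {σ : K → K}
    (hbij : Set.BijOn σ {Φ : K | FacetRel r Φ₀ Φ} {Φ : K | FacetRel r Φ₀ Φ})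
    (hinv : ∀ Φ : K, FacetRel r Φ₀ Φ → σ (σ Φ) = Φ)
    (hcomm : ∀ i : Fin n, (i : ℕ) + 1 < n → ∀ Φ : K, FacetRel r Φ₀ Φ →
      σ (r i Φ) = r i (σ Φ)) :
    ∃ rn'' : K → K, IsPreExtender r rn'' ∧ ∀ Φ : K, FacetRel r Φ₀ Φ → rn'' Φ = σ Φ := by
  classical
  set F : Set K := {Φ : K | FacetRel r Φ₀ Φ} with hF
  refine ⟨fun Φ => if Φ ∈ F then σ Φ else Φ, ⟨hK, ?_, ?_⟩, fun Φ h => if_pos h⟩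
  · intro Φ
    beta_reduce
    by_cases h1 : Φ ∈ F
    · rw [if_pos h1, if_pos (hbij.mapsTo h1)]
      exact hinv Φ h1
    · rw [if_neg h1, if_neg h1]
  · intro i hi x
    by_cases h1 : x ∈ F
    · have h1' : r i x ∈ F := h1.trans (facetRel_step hi x)
      rw [if_pos h1', if_pos h1]
      exact hcomm i hi x h1
    · have h1' : r i x ∉ F := fun h => h1 (facetRel_back hK hi h)
      rw [if_neg h1', if_neg h1]

end S19

/-- All universal Cayley extensions of `K` are pairwise isomorphic iff every
isomorphism between two distinct facets of `K`, and every involutory automorphism of a facet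
of `K`, extends to an automorphism of `K`. -/
theorem statement19 {K : Type*} {n : ℕ} (r : Fin n → K → K) (hK : IsManiplex n r) :
    (∀ rn rn' : K → K, IsPreExtender r rn → IsPreExtender r rn' →
        ∃ e : (K × PresentedGroup (UnivRels r rn)) ≃ (K × PresentedGroup (UnivRels r rn')),
          ∀ (i : Fin (n + 1)) (x : K × PresentedGroup (UnivRels r rn)),
            e (derivedMono r rn (univVoltage r rn) i x) =
              derivedMono r rn' (univVoltage r rn') i (e x)) ↔
      ((∀ Φ₀ Ψ₀ : K, ¬FacetRel r Φ₀ Ψ₀ → ∀ σ : K → K,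
          Set.BijOn σ {Φ : K | FacetRel r Φ₀ Φ} {Ψ : K | FacetRel r Ψ₀ Ψ} →
          (∀ i : Fin n, (i : ℕ) + 1 < n → ∀ Φ : K, FacetRel r Φ₀ Φ →
            σ (r i Φ) = r i (σ Φ)) →
          ∃ τ ∈ autGroup r, ∀ Φ : K, FacetRel r Φ₀ Φ → τ Φ = σ Φ) ∧
        (∀ Φ₀ : K, ∀ σ : K → K,
          Set.BijOn σ {Φ : K | FacetRel r Φ₀ Φ} {Φ : K | FacetRel r Φ₀ Φ} →
          (∀ Φ : K, FacetRel r Φ₀ Φ → σ (σ Φ) = Φ) →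
          (∀ i : Fin n, (i : ℕ) + 1 < n → ∀ Φ : K, FacetRel r Φ₀ Φ →
            σ (r i Φ) = r i (σ Φ)) →
          ∃ τ ∈ autGroup r, ∀ Φ : K, FacetRel r Φ₀ Φ → τ Φ = σ Φ)) := by
  classical
  constructor
  · intro hIso
    have main : ∀ (Φ₀ : K) (rn'' : K → K), IsPreExtender r rn'' →
        ∃ τ ∈ autGroup r, ∀ Φ : K, FacetRel r Φ₀ Φ → τ Φ = rn'' Φ := by
      intro Φ₀ rn'' hpre
      obtain ⟨e, he⟩ := hIso rn'' id hpre (S19.preext_id hK)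
      refine ⟨(S19.permOf hK e he (PresentedGroup.of Φ₀))⁻¹ * S19.permOf hK e he 1,
        Subgroup.mul_mem _ (Subgroup.inv_mem _ (S19.permOf_mem hK e he _))
          (S19.permOf_mem hK e he _), ?_⟩
      intro Φ hΦ
      have hlast := he (Fin.last n) (Φ, 1)
      rw [S19.derivedMono_last, S19.derivedMono_last] at hlast
      have h1 := congrArg Prod.fst hlast
      simp only [univVoltage, id_eq] at h1
      rw [mul_one, S19.of_facet_eq (S19.FacetRel.symm hK.invol hΦ)] at h1
      -- h1 : (e (rn'' Φ, PresentedGroup.of Φ₀)).1 = (e (Φ, 1)).1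
      have h2 : S19.permOf hK e he (PresentedGroup.of Φ₀) (rn'' Φ) =
          S19.permOf hK e he 1 Φ := h1
      show (S19.permOf hK e he (PresentedGroup.of Φ₀))⁻¹ (S19.permOf hK e he 1 Φ) = rn'' Φ
      rw [← h2, ← Equiv.Perm.mul_apply, inv_mul_cancel, Equiv.Perm.one_apply]
    constructor
    · intro Φ₀ Ψ₀ hsep σ hbij hcomm
      obtain ⟨rn'', hpre, hag⟩ := S19.preext_swap hK hsep hbij hcomm
      obtain ⟨τ, hτ, hτag⟩ := main Φ₀ rn'' hpre
      exact ⟨τ, hτ, fun Φ hΦ => (hτag Φ hΦ).trans (hag Φ hΦ)⟩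
    · intro Φ₀ σ hbij hinv hcomm
      obtain ⟨rn'', hpre, hag⟩ := S19.preext_fix hK hbij hinv hcomm
      obtain ⟨τ, hτ, hτag⟩ := main Φ₀ rn'' hpre
      exact ⟨τ, hτ, fun Φ hΦ => (hτag Φ hΦ).trans (hag Φ hΦ)⟩
  · rintro ⟨ha, hb⟩ rn rn' hrn hrn'
    exact S19.univ_iso_exists hK hrn hrn'
      (S19.extProp_of_conds hK ha hb hrn) (S19.extProp_of_conds hK ha hb hrn')
end
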